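/- arXiv:2403.19388 — 6 statements merged into one kernel-verified Lean document; each statement's English description precedes it below -/
import Mathlib

section
/- For every F ∈ ℕ and L ∈ [1,∞) there exist constants E, E‴ > 0 such that the following holds. Let R be a commutative ring, let (X,w) be a properly weighted R-oriented d-poset with d ≥ 1, lower irregularity L(X) ≤ L, and such that every 1-face of X contains at most F 0-faces. Let 𝓕 be an R-sheaf on X, let ε, α ≥ 0 and β > 0, and assume: (1) cbe_{−1}(X_v, w_v, 𝓕_v) ≥ ε for every v ∈ X(0); (2) the underlying weighted graph ugr(X,w) is an (α, β)-skeleton expander. Then ‖f‖_w ≥ E‴·(E·ε − α)/β for every f ∈ Z^0(X,𝓕) not lying in B^0(X,𝓕). -/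
open scoped Classical

noncomputable section

namespace FK

variable {V : Type*} [Fintype V] [PartialOrder V]

/-- The set of faces of dimension `i`. -/
def faces (dim : V → ℤ) (i : ℤ) : Finset V :=
  Finset.univ.filter fun x => dim x = i

/-- The set of faces of dimension `i` lying above `z`. -/
def facesAbove (dim : V → ℤ) (i : ℤ) (z : V) : Finset V :=
  Finset.univ.filter fun x => dim x = i ∧ z ≤ x

/-- The set of faces of dimension `i` lying below `y`. -/
def facesBelow (dim : V → ℤ) (i : ℤ) (y : V) : Finset V :=
  Finset.univ.filter fun x => dim x = i ∧ x ≤ y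

/-- The set of faces of dimension `j` lying between `x` and `z`. -/
def facesBetween (dim : V → ℤ) (j : ℤ) (x z : V) : Finset V :=
  Finset.univ.filter fun y => dim y = j ∧ x ≤ y ∧ y ≤ z

/-- Total weight of a finite set of faces. -/
def wsum (w : V → ℝ) (A : Finset V) : ℝ := ∑ x ∈ A, w x

/-- `(V, dim)` is a `d`-poset with least face `bot` (of dimension `-1`). -/
structure IsDPoset (dim : V → ℤ) (d : ℤ) (bot : V) : Prop where
  dim_strictMono : ∀ ⦃x y : V⦄, x < y → dim x < dim y
  dim_covBy : ∀ ⦃x y : V⦄, x ⋖ y → dim y = dim x + 1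
  bot_le : ∀ x : V, bot ≤ x
  dim_bot : dim bot = -1
  pure : ∀ x : V, ∃ y : V, x ≤ y ∧ dim y = d

/-- Graded poset axioms. -/
structure IsGraded (dim : V → ℤ) : Prop where
  dim_strictMono : ∀ ⦃x y : V⦄, x < y → dim x < dim y
  dim_covBy : ∀ ⦃x y : V⦄, x ⋖ y → dim y = dim x + 1

/-- `w` is a proper weight function on the `d`-poset `(V, dim)`. -/
structure IsProperWeight (dim : V → ℤ) (d : ℤ) (w : V → ℝ) : Prop where
  pos : ∀ x : V, 0 < w x
  total : wsum w (faces dim d) = 1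
  eq : ∀ x : V, w x = ∑ y ∈ facesAbove dim d x, w y / ((facesBelow dim (dim x) y).card : ℝ)

/-- The weight function induced on the link of `z`. -/
def linkWeight (dim : V → ℤ) (d : ℤ) (w : V → ℝ) (z x : V) : ℝ :=
  (wsum w (facesAbove dim d z))⁻¹ *
    ∑ y ∈ facesAbove dim d x, w y / ((facesBetween dim (dim x) z y).card : ℝ)

/-- An `R`-orientation on the graded poset `(V, dim)`. -/
structure IsOrientation (R : Type*) [CommRing R] (dim : V → ℤ) (sgn : V → V → R) : Prop where
  isUnit : ∀ ⦃x y : V⦄, x ⋖ y → IsUnit (sgn y x)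
  sum_eq_zero : ∀ ⦃x z : V⦄, x ≤ z → dim z = dim x + 2 →
    ∑ y ∈ Finset.univ.filter (fun y => x < y ∧ y < z), sgn z y * sgn y x = 0

/-- The restriction maps of a sheaf compose. -/
structure IsSheafRes (R : Type*) [CommRing R] (F : V → Type*)
    [∀ x, AddCommGroup (F x)] [∀ x, Module R (F x)]
    (res : ∀ x y : V, x ≤ y → (F x →ₗ[R] F y)) : Prop where
  refl : ∀ x : V, res x x le_rfl = LinearMap.id
  trans : ∀ ⦃x y z : V⦄ (hxy : x ≤ y) (hyz : y ≤ z),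
    (res y z hyz).comp (res x y hxy) = res x z (hxy.trans hyz)

/-- `i`-cochains with coefficients in the sheaf `F`. -/
abbrev Cochain (dim : V → ℤ) (F : V → Type*) (i : ℤ) : Type _ :=
  ∀ x : {x : V // dim x = i}, F x.1

/-- Cochains on the link of `u`, indexed by the ambient dimension `i`
(i.e. link-dimension `i - dim u - 1`). -/
abbrev LCochain (dim : V → ℤ) (F : V → Type*) (u : V) (i : ℤ) : Type _ :=
  ∀ x : {x : V // dim x = i ∧ u ≤ x}, F x.1

section Sheaf

variable {R : Type*} [CommRing R] (dim : V → ℤ) (F : V → Type*)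
  [∀ x, AddCommGroup (F x)] [∀ x, Module R (F x)]
  (sgn : V → V → R) (res : ∀ x y : V, x ≤ y → (F x →ₗ[R] F y))
  (w : V → ℝ) (d : ℤ)

/-- The coboundary map, from dimension `i` to dimension `j` (intended: `j = i + 1`). -/
def coboundary (i j : ℤ) (f : Cochain dim F i) : Cochain dim F j := fun y =>
  ∑ x : {x : V // dim x = i},
    if h : x.1 ≤ y.1 then sgn y.1 x.1 • res x.1 y.1 h (f x) else 0

/-- The coboundary map on the link of `u`. -/
def lcoboundary (u : V) (i j : ℤ) (f : LCochain dim F u i) : LCochain dim F u j := fun y =>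
  ∑ x : {x : V // dim x = i ∧ u ≤ x},
    if h : x.1 ≤ y.1 then sgn y.1 x.1 • res x.1 y.1 h (f x) else 0

/-- Weighted Hamming norm of a cochain. -/
def cnorm {i : ℤ} (f : Cochain dim F i) : ℝ :=
  ∑ x : {x : V // dim x = i}, if f x ≠ 0 then w x.1 else 0

/-- Norm of a cochain on the link of `u`, w.r.t. the weight induced on the link. -/
def lnorm (u : V) {i : ℤ} (f : LCochain dim F u i) : ℝ :=
  ∑ x : {x : V // dim x = i ∧ u ≤ x}, if f x ≠ 0 then linkWeight dim d w u x.1 else 0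

/-- `i`-cocycles. -/
def cocycles (i : ℤ) : Set (Cochain dim F i) :=
  {f | coboundary dim F sgn res i (i + 1) f = 0}

/-- `i`-coboundaries. -/
def coboundariesSet (i : ℤ) : Set (Cochain dim F i) :=
  {f | ∃ g : Cochain dim F (i - 1), coboundary dim F sgn res (i - 1) i g = f}

/-- Weighted Hamming distance from a cochain to a set of cochains. -/
def distTo {i : ℤ} (f : Cochain dim F i) (S : Set (Cochain dim F i)) : ℝ :=
  sInf ((fun g => cnorm dim F w (f - g)) '' S)

/-- Coboundaries on the link of `u`, at ambient dimension `i`. -/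
def lcoboundariesSet (u : V) (i : ℤ) : Set (LCochain dim F u i) :=
  {f | ∃ g : LCochain dim F u (i - 1), lcoboundary dim F sgn res u (i - 1) i g = f}

/-- `cbe_{i - dim u - 1}(X_u, w_u, F_u) ≥ ε`, expressed at ambient dimension `i`. -/
def LinkCbeGe (u : V) (i : ℤ) (ε : ℝ) : Prop :=
  ∀ f : LCochain dim F u i,
    ε * sInf ((fun g => lnorm dim F w d u (f - g)) '' lcoboundariesSet dim F sgn res u i)
      ≤ lnorm dim F w d u (lcoboundary dim F sgn res u i (i + 1) f)

/-- Extension of a link cochain by zero. -/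
def extendByZero (u : V) {i : ℤ} (b : LCochain dim F u i) : Cochain dim F i := fun x =>
  if h : u ≤ x.1 then b ⟨x.1, x.2, h⟩ else 0

/-- `f` is mock `q`-locally minimal at `u`. -/
def MockMinAt (q : ℝ) (m : ℤ) (f : Cochain dim F m) (u : V) : Prop :=
  ∀ g : LCochain dim F u (m - 1),
    cnorm dim F w f ≤
      cnorm dim F w (f + extendByZero dim F u (lcoboundary dim F sgn res u (m - 1) m g)) +
        q * w u

/-- `f` is mock `q`-locally minimal. -/
def MockMin (q : ℝ) (m : ℤ) (f : Cochain dim F m) : Prop :=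
  ∀ u : V, 0 ≤ dim u → dim u ≤ m → MockMinAt dim F sgn res w q m f u

end Sheaf

/-- `ugr(X_u, w_u)` is an `(α, β)`-skeleton expander. -/
def LinkUgrSkeletonExpander (dim : V → ℤ) (d : ℤ) (w : V → ℝ) (u : V) (α β : ℝ) : Prop :=
  ∀ A ⊆ facesAbove dim (dim u + 1) u,
    wsum (linkWeight dim d w u)
        ((facesAbove dim (dim u + 2) u).filter fun e =>
          ∃ x ∈ A, ∃ y ∈ A, x ≠ y ∧ x ≤ e ∧ y ≤ e)
      ≤ α * wsum (linkWeight dim d w u) A + β * wsum (linkWeight dim d w u) A ^ 2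

/-- `ugr(X, w)` is an `(α, β)`-skeleton expander. -/
def UgrSkeletonExpander (dim : V → ℤ) (w : V → ℝ) (α β : ℝ) : Prop :=
  ∀ A ⊆ faces dim 0,
    wsum w ((faces dim 1).filter fun e => ∃ x ∈ A, ∃ y ∈ A, x ≠ y ∧ x ≤ e ∧ y ≤ e)
      ≤ α * wsum w A + β * wsum w A ^ 2

/-- `NI^{1,1,2}(X, w)` is an `(α, β)`-skeleton expander. -/
def NI112SkeletonExpander (dim : V → ℤ) (w : V → ℝ) (bot : V) (α β : ℝ) : Prop :=
  ∀ A ⊆ faces dim 1,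
    wsum w ((faces dim 2).filter fun z =>
        ∃ x ∈ A, ∃ y ∈ A, x ≠ y ∧ x ≤ z ∧ y ≤ z ∧ ∀ t : V, t ≤ x → t ≤ y → t = bot)
      ≤ α * wsum w A + β * wsum w A ^ 2

/-- Pairs of an `i`-face and a `k`-face that are incident. -/
def incidentPairs (dim : V → ℤ) (i k : ℤ) : Finset (V × V) :=
  Finset.univ.filter fun p => dim p.1 = i ∧ dim p.2 = k ∧ p.1 ≤ p.2

/-- `F^max_{i,j,k}(X)`. -/
def Fmax (dim : V → ℤ) (i j k : ℤ) : ℕ :=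
  (incidentPairs dim i k).sup fun p => (facesBetween dim j p.1 p.2).card

/-- `F^min_{i,j,k}(X)`. -/
def Fmin (dim : V → ℤ) (i j k : ℤ) : ℕ :=
  if h : (incidentPairs dim i k).Nonempty then
    ((incidentPairs dim i k).image fun p => (facesBetween dim j p.1 p.2).card).min'
      (h.image _)
  else 0

end FK

/-!
For a vertex `v` in the support `A` of a `0`-cocycle `f`, the value `f v` is a `(-1)`-cochain on
the link of `v`. The link has no `(-1)`-coboundaries, so coboundary expansion of the link gives
`ε ≤ w_v(S_v)`, where `S_v` is the set of edges at `v` to which `f v` restricts nontrivially.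
Bounded lower irregularity compares link weights with global ones, `w v * w_v e ≤ L² * w e`,
hence `ε * w v ≤ L² * w(S_v)`. The cocycle condition puts a second vertex of `A` below every edge
of `S_v`, so the `S_v` consist of edges inside `A`, each counted at most `F` times:
`ε * w(A) ≤ L² F * w(E(A)) ≤ L² F * (α w(A) + β w(A)²)`. Dividing by `w(A) > 0` (as `f ∉ B⁰`
forces `f ≠ 0`) gives the bound.
-/

namespace FK

variable {V : Type*} {dim : V → ℤ} {d : ℤ} {bot : V} {w : V → ℝ}

section Graded

variable [PartialOrder V]

theorem IsDPoset.isGraded (hP : IsDPoset dim d bot) : IsGraded dim :=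
  ⟨hP.dim_strictMono, hP.dim_covBy⟩

theorem IsGraded.eq_of_le_of_dim_le (hX : IsGraded dim) {x y : V} (hxy : x ≤ y)
    (h : dim y ≤ dim x) : x = y :=
  hxy.eq_or_lt.resolve_right fun hlt => (hX.dim_strictMono hlt).not_ge h

theorem IsGraded.covBy_of_le (hX : IsGraded dim) {x y : V} (hxy : x ≤ y)
    (h : dim y = dim x + 1) : x ⋖ y :=
  ⟨hxy.lt_of_ne (by rintro rfl; omega), fun c hxc hcy => by
    have := hX.dim_strictMono hxc
    have := hX.dim_strictMono hcy
    omega⟩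

theorem IsGraded.dim_monotone (hX : IsGraded dim) : Monotone dim := fun _ _ hxy =>
  hxy.eq_or_lt.elim (fun h => h ▸ le_rfl) fun h => (hX.dim_strictMono h).le

theorem IsDPoset.neg_one_le_dim (hP : IsDPoset dim d bot) (x : V) : -1 ≤ dim x :=
  hP.dim_bot ▸ hP.isGraded.dim_monotone (hP.bot_le x)

theorem IsDPoset.dim_le (hP : IsDPoset dim d bot) (x : V) : dim x ≤ d := by
  obtain ⟨y, hxy, hy⟩ := hP.pure x
  exact hy ▸ hP.isGraded.dim_monotone hxy

end Graded

theorem sum_wsum_le_mul_wsum {ι : Type*} (hw : ∀ x, 0 ≤ w x) {A : Finset ι}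
    {B : ι → Finset V} {T : Finset V} {n : ℕ} (hBT : ∀ a ∈ A, B a ⊆ T)
    (hn : ∀ e ∈ T, (A.filter fun a => e ∈ B a).card ≤ n) :
    ∑ a ∈ A, wsum w (B a) ≤ n * wsum w T := by
  unfold wsum
  rw [Finset.sum_comm' (t' := T) (s' := fun e => A.filter fun a => e ∈ B a)
    fun a e => by
      simp only [Finset.mem_filter]
      exact ⟨fun h => ⟨⟨h.1, h.2⟩, hBT a h.1 h.2⟩, fun h => h.1⟩, Finset.mul_sum]
  refine Finset.sum_le_sum fun e he => ?_
  rw [Finset.sum_const, nsmul_eq_mul]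
  exact mul_le_mul_of_nonneg_right (by exact_mod_cast hn e he) (hw e)

variable [Fintype V]

section Support

variable {F : V → Type*} [∀ x, AddCommGroup (F x)]

def support {i : ℤ} (f : Cochain dim F i) : Finset V :=
  (Finset.univ.filter fun x => f x ≠ 0).map (Function.Embedding.subtype _)

theorem mem_support {i : ℤ} {f : Cochain dim F i} {x : V} :
    x ∈ support f ↔ ∃ h : dim x = i, f ⟨x, h⟩ ≠ 0 := by
  simp [support]

theorem cnorm_eq_wsum_support {i : ℤ} (f : Cochain dim F i) :
    cnorm dim F w f = wsum w (support f) := by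
  rw [cnorm, wsum, support, Finset.sum_map, Finset.sum_filter]
  rfl

theorem support_subset_faces {i : ℤ} (f : Cochain dim F i) : support f ⊆ faces dim i :=
  fun x hx => by
    obtain ⟨hx, -⟩ := mem_support.1 hx
    simp [faces, hx]

theorem wsum_support_pos (hw : ∀ x, 0 < w x) {i : ℤ} {f : Cochain dim F i} (hf : f ≠ 0) :
    0 < wsum w (support f) := by
  obtain ⟨x, hx⟩ := Function.ne_iff.1 hf
  exact Finset.sum_pos' (fun y _ => (hw y).le) ⟨x.1, mem_support.2 ⟨x.2, hx⟩, hw x.1⟩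

end Support

variable [PartialOrder V]

theorem IsGraded.exists_between_dim_eq (hX : IsGraded dim) {x z : V} (hxz : x ≤ z) {j : ℤ}
    (hxj : dim x ≤ j) (hjz : j ≤ dim z) : ∃ y, x ≤ y ∧ y ≤ z ∧ dim y = j := by
  obtain ⟨n, rfl⟩ : ∃ n : ℕ, j = dim x + n := ⟨(j - dim x).toNat, by omega⟩
  induction n generalizing x with
  | zero => exact ⟨x, le_rfl, hxz, by simp⟩
  | succ n ih =>
    obtain ⟨c, hxc, hcz⟩ := exists_covBy_le_of_lt (hxz.lt_of_ne (by rintro rfl; omega))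
    have hc := hX.dim_covBy hxc
    obtain ⟨y, hcy, hyz, hy⟩ := ih hcz (by omega) (by omega)
    exact ⟨y, hxc.le.trans hcy, hyz, by push_cast at hy ⊢; omega⟩

theorem IsGraded.card_facesBetween_pos (hX : IsGraded dim) {x z : V} (hxz : x ≤ z) {j : ℤ}
    (hxj : dim x ≤ j) (hjz : j ≤ dim z) : 0 < (facesBetween dim j x z).card := by
  obtain ⟨y, hxy, hyz, hy⟩ := hX.exists_between_dim_eq hxz hxj hjz
  exact Finset.card_pos.mpr ⟨y, by simp [facesBetween, hxy, hyz, hy]⟩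

theorem facesBelow_eq_facesBetween (hbot : ∀ x, bot ≤ x) (j : ℤ) (y : V) :
    facesBelow dim j y = facesBetween dim j bot y := by
  ext t
  simp [facesBelow, facesBetween, hbot t]

theorem mem_incidentPairs {x z : V} {i k : ℤ} (hx : dim x = i) (hz : dim z = k) (hxz : x ≤ z) :
    (x, z) ∈ incidentPairs dim i k := by
  simp [incidentPairs, hx, hz, hxz]

theorem card_facesBetween_le_Fmax {x z : V} {i k : ℤ} (hx : dim x = i) (hz : dim z = k)
    (hxz : x ≤ z) (j : ℤ) : (facesBetween dim j x z).card ≤ Fmax dim i j k :=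
  Finset.le_sup (f := fun p => (facesBetween dim j p.1 p.2).card) (mem_incidentPairs hx hz hxz)

theorem Fmin_le_card_facesBetween {x z : V} {i k : ℤ} (hx : dim x = i) (hz : dim z = k)
    (hxz : x ≤ z) (j : ℤ) : Fmin dim i j k ≤ (facesBetween dim j x z).card := by
  have hmem := mem_incidentPairs hx hz hxz
  rw [Fmin, dif_pos ⟨_, hmem⟩]
  exact Finset.min'_le _ _ (Finset.mem_image_of_mem _ hmem)

theorem IsGraded.Fmin_pos (hX : IsGraded dim) {x z : V} {i j k : ℤ} (hx : dim x = i)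
    (hz : dim z = k) (hxz : x ≤ z) (hij : i ≤ j) (hjk : j ≤ k) : 0 < Fmin dim i j k := by
  have hne : (incidentPairs dim i k).Nonempty := ⟨_, mem_incidentPairs hx hz hxz⟩
  rw [Fmin, dif_pos hne]
  obtain ⟨p, hp, hpmin⟩ := Finset.mem_image.mp
    (Finset.min'_mem ((incidentPairs dim i k).image fun p => (facesBetween dim j p.1 p.2).card)
      (hne.image _))
  rw [← hpmin]
  simp only [incidentPairs, Finset.mem_filter, Finset.mem_univ, true_and] at hp
  exact hX.card_facesBetween_pos hp.2.2 (by omega) (by omega)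

/-- `L(X) ≤ L`. -/
def LowerIrregularityLE (dim : V → ℤ) (d : ℤ) (L : ℝ) : Prop :=
  ∀ i j k : ℤ, -1 ≤ i → i ≤ j → j ≤ k → k ≤ d →
    (Fmax dim i j k : ℝ) ≤ L * (Fmin dim i j k : ℝ)

theorem IsDPoset.card_facesBelow_le (hP : IsDPoset dim d bot) {i j : ℤ} (hi : -1 ≤ i)
    (hij : i ≤ j) (y : V) :
    (facesBelow dim j y).card ≤ (facesBelow dim i y).card * Fmax dim i j (dim y) := by
  calc (facesBelow dim j y).card
      ≤ ((facesBelow dim i y).biUnion fun t => facesBetween dim j t y).card := by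
        refine Finset.card_le_card fun e he => ?_
        simp only [facesBelow, Finset.mem_filter, Finset.mem_univ, true_and] at he
        obtain ⟨t, -, hte, ht⟩ := hP.isGraded.exists_between_dim_eq (hP.bot_le e)
          (hP.dim_bot ▸ hi) (by omega)
        simp only [Finset.mem_biUnion, facesBelow, facesBetween, Finset.mem_filter,
          Finset.mem_univ, true_and]
        exact ⟨t, ⟨ht, hte.trans he.2⟩, he.1, hte, he.2⟩
    _ ≤ ∑ t ∈ facesBelow dim i y, (facesBetween dim j t y).card := Finset.card_biUnion_le
    _ ≤ ∑ _t ∈ facesBelow dim i y, Fmax dim i j (dim y) := Finset.sum_le_sum fun t ht => by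
        simp only [facesBelow, Finset.mem_filter, Finset.mem_univ, true_and] at ht
        exact card_facesBetween_le_Fmax ht.1 rfl ht.2 j
    _ = (facesBelow dim i y).card * Fmax dim i j (dim y) := by
        rw [Finset.sum_const, smul_eq_mul]

theorem IsProperWeight.wsum_facesAbove_pos (hw : IsProperWeight dim d w)
    (hP : IsDPoset dim d bot) (z : V) : 0 < wsum w (facesAbove dim d z) := by
  obtain ⟨y, hzy, hy⟩ := hP.pure z
  exact Finset.sum_pos' (fun x _ => (hw.pos x).le) ⟨y, by simp [facesAbove, hzy, hy], hw.pos y⟩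

theorem IsProperWeight.linkWeight_self (hw : IsProperWeight dim d w) (hP : IsDPoset dim d bot)
    (z : V) : linkWeight dim d w z z = 1 := by
  have hsingleton : ∀ y ∈ facesAbove dim d z, facesBetween dim (dim z) z y = {z} := by
    intro y hy
    ext t
    simp only [facesAbove, facesBetween, Finset.mem_filter, Finset.mem_univ, true_and,
      Finset.mem_singleton] at hy ⊢
    constructor
    · rintro ⟨ht, hzt, -⟩
      exact (hP.isGraded.eq_of_le_of_dim_le hzt ht.le).symm
    · rintro rfl
      exact ⟨rfl, le_rfl, hy.2⟩
  rw [linkWeight, Finset.sum_congr rfl fun y hy => by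
    rw [hsingleton y hy, Finset.card_singleton, Nat.cast_one, div_one]]
  exact inv_mul_cancel₀ (hw.wsum_facesAbove_pos hP z).ne'

theorem IsProperWeight.Fmin_mul_le_wsum_facesAbove (hw : IsProperWeight dim d w)
    (hP : IsDPoset dim d bot) (z : V) :
    (Fmin dim (-1) (dim z) d : ℝ) * w z ≤ wsum w (facesAbove dim d z) := by
  rw [hw.eq z, Finset.mul_sum]
  refine Finset.sum_le_sum fun y hy => ?_
  simp only [facesAbove, Finset.mem_filter, Finset.mem_univ, true_and] at hy
  rw [facesBelow_eq_facesBetween hP.bot_le]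
  have hpos : (0 : ℝ) < (facesBetween dim (dim z) bot y).card := by
    exact_mod_cast hP.isGraded.card_facesBetween_pos (hP.bot_le y)
      (hP.isGraded.dim_monotone (hP.bot_le z)) (hP.isGraded.dim_monotone hy.2)
  have hmin : (Fmin dim (-1) (dim z) d : ℝ) ≤ (facesBetween dim (dim z) bot y).card := by
    exact_mod_cast Fmin_le_card_facesBetween hP.dim_bot hy.1 (hP.bot_le y) _
  calc (Fmin dim (-1) (dim z) d : ℝ) * (w y / (facesBetween dim (dim z) bot y).card)
      ≤ (facesBetween dim (dim z) bot y).card * (w y / (facesBetween dim (dim z) bot y).card) :=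
        mul_le_mul_of_nonneg_right hmin (div_nonneg (hw.pos y).le hpos.le)
    _ = w y := mul_div_cancel₀ _ hpos.ne'

theorem IsProperWeight.linkWeight_le (hw : IsProperWeight dim d w) (hP : IsDPoset dim d bot)
    {L : ℝ} (hL : 0 ≤ L) (hLX : LowerIrregularityLE dim d L) {z x : V} (hzx : z ≤ x) :
    linkWeight dim d w z x ≤
      (wsum w (facesAbove dim d z))⁻¹ * (L * Fmax dim (-1) (dim z) d * w x) := by
  have hX := hP.isGraded
  rw [linkWeight, hw.eq x]
  refine mul_le_mul_of_nonneg_left ?_ (inv_nonneg.mpr (hw.wsum_facesAbove_pos hP z).le)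
  rw [Finset.mul_sum]
  refine Finset.sum_le_sum fun y hy => ?_
  simp only [facesAbove, Finset.mem_filter, Finset.mem_univ, true_and] at hy
  obtain ⟨hy, hxy⟩ := hy
  have hzy := hzx.trans hxy
  have hzx' := hX.dim_monotone hzx
  have hxd := hP.dim_le x
  have hbetween : (0 : ℝ) < (facesBetween dim (dim x) z y).card := by
    exact_mod_cast hX.card_facesBetween_pos hzy hzx' (hX.dim_monotone hxy)
  have hbelow : (0 : ℝ) < (facesBelow dim (dim x) y).card := by
    rw [facesBelow_eq_facesBetween hP.bot_le]
    exact_mod_cast hX.card_facesBetween_pos (hP.bot_le y)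
      (hX.dim_monotone (hP.bot_le x)) (hX.dim_monotone hxy)
  have hsplit : ((facesBelow dim (dim x) y).card : ℝ) ≤
      (facesBelow dim (dim z) y).card * Fmax dim (dim z) (dim x) d := by
    exact_mod_cast hy ▸ hP.card_facesBelow_le (hP.neg_one_le_dim z) hzx' y
  have hvert : ((facesBelow dim (dim z) y).card : ℝ) ≤ Fmax dim (-1) (dim z) d := by
    rw [facesBelow_eq_facesBetween hP.bot_le]
    exact_mod_cast card_facesBetween_le_Fmax hP.dim_bot hy (hP.bot_le y) _
  have hFmin : (Fmin dim (dim z) (dim x) d : ℝ) ≤ (facesBetween dim (dim x) z y).card := by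
    exact_mod_cast Fmin_le_card_facesBetween rfl hy hzy _
  have hcount : ((facesBelow dim (dim x) y).card : ℝ) ≤
      L * Fmax dim (-1) (dim z) d * (facesBetween dim (dim x) z y).card := by
    calc ((facesBelow dim (dim x) y).card : ℝ)
        ≤ Fmax dim (-1) (dim z) d * (L * Fmin dim (dim z) (dim x) d) :=
          hsplit.trans (mul_le_mul hvert (hLX _ _ _ (hP.neg_one_le_dim z) hzx' hxd le_rfl)
            (Nat.cast_nonneg _) (Nat.cast_nonneg _))
      _ ≤ Fmax dim (-1) (dim z) d * (L * (facesBetween dim (dim x) z y).card) := by gcongr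
      _ = L * Fmax dim (-1) (dim z) d * (facesBetween dim (dim x) z y).card := by ring
  rw [mul_div_assoc', div_le_div_iff₀ hbetween hbelow]
  calc w y * (facesBelow dim (dim x) y).card
      ≤ w y * (L * Fmax dim (-1) (dim z) d * (facesBetween dim (dim x) z y).card) :=
        mul_le_mul_of_nonneg_left hcount (hw.pos y).le
    _ = L * Fmax dim (-1) (dim z) d * w y * (facesBetween dim (dim x) z y).card := by ring

theorem IsProperWeight.mul_linkWeight_le (hw : IsProperWeight dim d w)
    (hP : IsDPoset dim d bot) {L : ℝ} (hL : 0 ≤ L) (hLX : LowerIrregularityLE dim d L)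
    {z x : V} (hzx : z ≤ x) : w z * linkWeight dim d w z x ≤ L ^ 2 * w x := by
  obtain ⟨y, -, hy⟩ := hP.pure z
  have hm : (0 : ℝ) < Fmin dim (-1) (dim z) d := by
    exact_mod_cast hP.isGraded.Fmin_pos hP.dim_bot hy (hP.bot_le y) (hP.neg_one_le_dim z)
      (hP.dim_le z)
  set N := wsum w (facesAbove dim d z)
  set m : ℝ := (Fmin dim (-1) (dim z) d : ℝ)
  set M : ℝ := (Fmax dim (-1) (dim z) d : ℝ)
  have hN : 0 < N := hw.wsum_facesAbove_pos hP z
  have hMm : M ≤ L * m := hLX _ _ _ le_rfl (hP.neg_one_le_dim z) (hP.dim_le z) le_rfl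
  have hwz : w z * N⁻¹ ≤ m⁻¹ := by
    rw [← div_eq_mul_inv, div_le_iff₀ hN, ← div_eq_inv_mul, le_div_iff₀ hm, mul_comm]
    exact hw.Fmin_mul_le_wsum_facesAbove hP z
  calc w z * linkWeight dim d w z x
      ≤ w z * (N⁻¹ * (L * M * w x)) :=
        mul_le_mul_of_nonneg_left (hw.linkWeight_le hP hL hLX hzx) (hw.pos z).le
    _ = (w z * N⁻¹) * (L * M * w x) := by ring
    _ ≤ m⁻¹ * (L * (L * m) * w x) := by
        gcongr
        · exact mul_nonneg (mul_nonneg hL (Nat.cast_nonneg _)) (hw.pos x).le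
        · exact (hw.pos x).le
    _ = L ^ 2 * w x := by field_simp

variable {R : Type*} [CommRing R] {F : V → Type*} [∀ x, AddCommGroup (F x)]
  [∀ x, Module R (F x)] {sgn : V → V → R} {res : ∀ x y : V, x ≤ y → (F x →ₗ[R] F y)}

def lsupport {u : V} {i : ℤ} (f : LCochain dim F u i) : Finset V :=
  (Finset.univ.filter fun x => f x ≠ 0).map (Function.Embedding.subtype _)

theorem mem_lsupport {u : V} {i : ℤ} {f : LCochain dim F u i} {x : V} :
    x ∈ lsupport f ↔ ∃ h : dim x = i ∧ u ≤ x, f ⟨x, h⟩ ≠ 0 := by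
  simp [lsupport]

theorem lnorm_eq_wsum_lsupport {u : V} {i : ℤ} (f : LCochain dim F u i) :
    lnorm dim F w d u f = wsum (linkWeight dim d w u) (lsupport f) := by
  rw [lnorm, wsum, lsupport, Finset.sum_map, Finset.sum_filter]
  rfl

theorem coboundary_zero (i j : ℤ) : coboundary dim F sgn res i j 0 = 0 := by
  funext y
  simp [coboundary]

theorem ne_zero_of_notMem_coboundariesSet {i : ℤ} {f : Cochain dim F i}
    (hf : f ∉ coboundariesSet dim F sgn res i) : f ≠ 0 := by
  rintro rfl
  exact hf ⟨0, coboundary_zero _ _⟩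

theorem IsGraded.lcoboundariesSet_eq_zero (hX : IsGraded dim) {u : V} {i : ℤ}
    (hi : i ≤ dim u) : lcoboundariesSet dim F sgn res u i = {0} := by
  have : IsEmpty {x : V // dim x = i - 1 ∧ u ≤ x} :=
    ⟨fun x => by have := hX.dim_monotone x.2.2; omega⟩
  have hzero : ∀ g, lcoboundary dim F sgn res u (i - 1) i g = 0 := fun g => by
    funext y
    simp [lcoboundary]
  ext f
  exact ⟨fun ⟨g, hg⟩ => hg ▸ hzero g, fun hf => ⟨0, (hzero 0).trans hf.symm⟩⟩

/-- Below the dimension of `u` the link of `u` has no coboundaries, so the coboundary expansion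
hypothesis reduces to an isoperimetric inequality. -/
theorem LinkCbeGe.mul_lnorm_le (hX : IsGraded dim) {u : V} {i : ℤ} {ε : ℝ}
    (hcbe : LinkCbeGe dim F sgn res w d u i ε) (hi : i ≤ dim u) (f : LCochain dim F u i) :
    ε * lnorm dim F w d u f ≤ lnorm dim F w d u (lcoboundary dim F sgn res u i (i + 1) f) := by
  have := hcbe f
  rwa [hX.lcoboundariesSet_eq_zero hi, Set.image_singleton, sub_zero, csInf_singleton] at this

variable (res) in
/-- `f u` as a cochain of link dimension `-1` on `X_u`, whose only face of that dimension is `u`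
itself. -/
def localize {i : ℤ} (f : Cochain dim F i) (u : V) (hu : dim u = i) : LCochain dim F u i :=
  fun x => res u x.1 x.2.2 (f ⟨u, hu⟩)

variable (res) in
def cofaceSupport {i : ℤ} (f : Cochain dim F i) (u : V) : Finset V :=
  Finset.univ.filter fun e =>
    dim e = i + 1 ∧ ∃ (hu : dim u = i) (h : u ≤ e), res u e h (f ⟨u, hu⟩) ≠ 0

theorem lsupport_localize (hX : IsGraded dim) (hres : IsSheafRes R F res) {i : ℤ}
    {f : Cochain dim F i} {u : V} (hu : dim u = i) (hfu : f ⟨u, hu⟩ ≠ 0) :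
    lsupport (localize res f u hu) = {u} := by
  ext x
  rw [mem_lsupport, Finset.mem_singleton]
  constructor
  · rintro ⟨⟨hx, hux⟩, -⟩
    exact (hX.eq_of_le_of_dim_le hux (hx.trans hu.symm).le).symm
  · rintro rfl
    refine ⟨⟨hu, le_rfl⟩, ?_⟩
    simpa [localize, hres.refl] using hfu

theorem lcoboundary_localize_apply (hX : IsGraded dim) (hres : IsSheafRes R F res) {i j : ℤ}
    (f : Cochain dim F i) {u : V} (hu : dim u = i) (e : {x : V // dim x = j ∧ u ≤ x}) :
    lcoboundary dim F sgn res u i j (localize res f u hu) e =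
      sgn e.1 u • res u e.1 e.2.2 (f ⟨u, hu⟩) := by
  rw [lcoboundary, Finset.sum_eq_single_of_mem ⟨u, hu, le_rfl⟩ (Finset.mem_univ _)]
  · rw [dif_pos e.2.2, localize, ← LinearMap.comp_apply, hres.trans]
  · rintro ⟨x, hx, hux⟩ - hne
    exact absurd (Subtype.ext (hX.eq_of_le_of_dim_le hux (hx.trans hu.symm).le).symm) hne

theorem lsupport_lcoboundary_localize (hX : IsGraded dim) (hsgn : IsOrientation R dim sgn)
    (hres : IsSheafRes R F res) {i : ℤ} (f : Cochain dim F i) {u : V} (hu : dim u = i) :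
    lsupport (lcoboundary dim F sgn res u i (i + 1) (localize res f u hu)) =
      cofaceSupport res f u := by
  ext e
  simp only [mem_lsupport, cofaceSupport, Finset.mem_filter, Finset.mem_univ, true_and]
  constructor
  · rintro ⟨⟨he, hue⟩, hne⟩
    rw [lcoboundary_localize_apply hX hres] at hne
    exact ⟨he, hu, hue, fun h => hne (by rw [h, smul_zero])⟩
  · rintro ⟨he, _, hue, hne⟩
    refine ⟨⟨he, hue⟩, ?_⟩
    rw [lcoboundary_localize_apply hX hres, Ne,
      (hsgn.isUnit (hX.covBy_of_le hue (by omega))).smul_eq_zero]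
    exact hne

theorem le_of_mem_cofaceSupport {i : ℤ} {f : Cochain dim F i} {u e : V}
    (he : e ∈ cofaceSupport res f u) : u ≤ e := by
  simp only [cofaceSupport, Finset.mem_filter, Finset.mem_univ, true_and] at he
  exact he.2.2.1

theorem le_wsum_linkWeight_cofaceSupport (hP : IsDPoset dim d bot)
    (hw : IsProperWeight dim d w) (hsgn : IsOrientation R dim sgn) (hres : IsSheafRes R F res)
    {i : ℤ} {ε : ℝ} {f : Cochain dim F i} {u : V} (hu : dim u = i)
    (hcbe : LinkCbeGe dim F sgn res w d u i ε) (hfu : f ⟨u, hu⟩ ≠ 0) :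
    ε ≤ wsum (linkWeight dim d w u) (cofaceSupport res f u) := by
  have := hcbe.mul_lnorm_le hP.isGraded hu.ge (localize res f u hu)
  rwa [lnorm_eq_wsum_lsupport, lnorm_eq_wsum_lsupport, lsupport_localize hP.isGraded hres hu hfu,
    lsupport_lcoboundary_localize hP.isGraded hsgn hres, wsum, Finset.sum_singleton,
    hw.linkWeight_self hP, mul_one] at this

theorem mul_weight_le_wsum_cofaceSupport (hP : IsDPoset dim d bot)
    (hw : IsProperWeight dim d w) {L : ℝ} (hL : 0 ≤ L) (hLX : LowerIrregularityLE dim d L)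
    (hsgn : IsOrientation R dim sgn) (hres : IsSheafRes R F res)
    {i : ℤ} {ε : ℝ} {f : Cochain dim F i} {u : V} (hu : dim u = i)
    (hcbe : LinkCbeGe dim F sgn res w d u i ε) (hfu : f ⟨u, hu⟩ ≠ 0) :
    ε * w u ≤ L ^ 2 * wsum w (cofaceSupport res f u) := by
  calc ε * w u ≤ w u * wsum (linkWeight dim d w u) (cofaceSupport res f u) := by
        rw [mul_comm]
        exact mul_le_mul_of_nonneg_left
          (le_wsum_linkWeight_cofaceSupport hP hw hsgn hres hu hcbe hfu) (hw.pos u).le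
    _ = ∑ e ∈ cofaceSupport res f u, w u * linkWeight dim d w u e := Finset.mul_sum _ _ _
    _ ≤ ∑ e ∈ cofaceSupport res f u, L ^ 2 * w e := Finset.sum_le_sum fun e he =>
        hw.mul_linkWeight_le hP hL hLX (le_of_mem_cofaceSupport he)
    _ = L ^ 2 * wsum w (cofaceSupport res f u) := (Finset.mul_sum _ _ _).symm

/-- The `u`-term of `(δ f) e = 0` is nonzero because `[e : u]` is a unit, so another term is
nonzero too. -/
theorem exists_mem_support_of_mem_cofaceSupport (hX : IsGraded dim)
    (hsgn : IsOrientation R dim sgn) {i : ℤ} {f : Cochain dim F i}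
    (hf : f ∈ cocycles dim F sgn res i) {u e : V} (he : e ∈ cofaceSupport res f u) :
    ∃ u' ∈ support f, u' ≠ u ∧ u' ≤ e := by
  simp only [cofaceSupport, Finset.mem_filter, Finset.mem_univ, true_and] at he
  obtain ⟨he, hu, hue, hne⟩ := he
  by_contra! hothers
  have hterm : sgn e u • res u e hue (f ⟨u, hu⟩) = 0 := by
    have h0 : coboundary dim F sgn res i (i + 1) f ⟨e, he⟩ = 0 := congrFun hf ⟨e, he⟩
    rw [coboundary, Finset.sum_eq_single_of_mem ⟨u, hu⟩ (Finset.mem_univ _), dif_pos hue] at h0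
    · exact h0
    · rintro ⟨x, hx⟩ - hxu
      split_ifs with hxe
      · have hfx : f ⟨x, hx⟩ = 0 := by
          by_contra hfx
          exact hothers x (mem_support.2 ⟨hx, hfx⟩) (fun h => hxu (Subtype.ext h)) hxe
        rw [hfx, map_zero, smul_zero]
      · rfl
  rw [(hsgn.isUnit (hX.covBy_of_le hue (by omega))).smul_eq_zero] at hterm
  exact hne hterm

def innerEdges (dim : V → ℤ) (A : Finset V) : Finset V :=
  (faces dim 1).filter fun e => ∃ x ∈ A, ∃ y ∈ A, x ≠ y ∧ x ≤ e ∧ y ≤ e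

theorem cofaceSupport_subset_innerEdges (hX : IsGraded dim) (hsgn : IsOrientation R dim sgn)
    {f : Cochain dim F 0} (hf : f ∈ cocycles dim F sgn res 0) {v : V} (hv : v ∈ support f) :
    cofaceSupport res f v ⊆ innerEdges dim (support f) := fun e he => by
  obtain ⟨u, hu, huv, hue⟩ := exists_mem_support_of_mem_cofaceSupport hX hsgn hf he
  simp only [cofaceSupport, Finset.mem_filter, Finset.mem_univ, true_and] at he
  simp only [innerEdges, faces, Finset.mem_filter, Finset.mem_univ, true_and]
  exact ⟨he.1, v, hv, u, hu, huv.symm, he.2.2.1, hue⟩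

theorem mul_wsum_support_le (hP : IsDPoset dim d bot) (hw : IsProperWeight dim d w) {L : ℝ}
    (hL : 0 ≤ L) (hLX : LowerIrregularityLE dim d L) (hsgn : IsOrientation R dim sgn)
    (hres : IsSheafRes R F res) {Fc : ℕ}
    (hFc : ∀ e : V, dim e = 1 → (facesBelow dim 0 e).card ≤ Fc) {ε : ℝ}
    (hcbe : ∀ v : V, dim v = 0 → LinkCbeGe dim F sgn res w d v 0 ε)
    {f : Cochain dim F 0} (hf : f ∈ cocycles dim F sgn res 0) :
    ε * wsum w (support f) ≤ L ^ 2 * (Fc * wsum w (innerEdges dim (support f))) := by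
  calc ε * wsum w (support f) = ∑ v ∈ support f, ε * w v := Finset.mul_sum _ _ _
    _ ≤ ∑ v ∈ support f, L ^ 2 * wsum w (cofaceSupport res f v) :=
        Finset.sum_le_sum fun v hv => by
          obtain ⟨hv, hfv⟩ := mem_support.1 hv
          exact mul_weight_le_wsum_cofaceSupport hP hw hL hLX hsgn hres hv (hcbe v hv) hfv
    _ = L ^ 2 * ∑ v ∈ support f, wsum w (cofaceSupport res f v) := (Finset.mul_sum _ _ _).symm
    _ ≤ L ^ 2 * (Fc * wsum w (innerEdges dim (support f))) := by
        refine mul_le_mul_of_nonneg_left (sum_wsum_le_mul_wsum (fun x => (hw.pos x).le)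
          (fun v hv => cofaceSupport_subset_innerEdges hP.isGraded hsgn hf hv)
          fun e he => ?_) (sq_nonneg L)
        simp only [innerEdges, faces, Finset.mem_filter, Finset.mem_univ, true_and] at he
        refine le_trans (Finset.card_le_card fun v hv => ?_) (hFc e he.1)
        simp only [Finset.mem_filter] at hv
        obtain ⟨hv0, -⟩ := mem_support.1 hv.1
        simp [facesBelow, hv0, le_of_mem_cofaceSupport hv.2]

end FK

/-- lower bound on the 0-cocycle distance. -/
theorem statement2 (Fc : ℕ) (L : ℝ) (hL : 1 ≤ L) :
    ∃ E E''' : ℝ, 0 < E ∧ 0 < E''' ∧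
      ∀ (V : Type) (_ : Fintype V) (_ : PartialOrder V) (dim : V → ℤ) (d : ℤ) (bot : V),
        FK.IsDPoset dim d bot → 1 ≤ d →
        (∀ i j k : ℤ, -1 ≤ i → i ≤ j → j ≤ k → k ≤ d →
          (FK.Fmax dim i j k : ℝ) ≤ L * (FK.Fmin dim i j k : ℝ)) →
        (∀ e : V, dim e = 1 → (FK.facesBelow dim 0 e).card ≤ Fc) →
        ∀ w : V → ℝ, FK.IsProperWeight dim d w →
        ∀ (R : Type) (_ : CommRing R) (sgn : V → V → R), FK.IsOrientation R dim sgn →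
        ∀ (F : V → Type) (_ : ∀ x, AddCommGroup (F x)) (_ : ∀ x, Module R (F x))
          (res : ∀ x y : V, x ≤ y → (F x →ₗ[R] F y)), FK.IsSheafRes R F res →
        ∀ ε α β : ℝ, 0 ≤ ε → 0 ≤ α → 0 < β →
        (∀ v : V, dim v = 0 → FK.LinkCbeGe dim F sgn res w d v 0 ε) →
        FK.UgrSkeletonExpander dim w α β →
        ∀ f : FK.Cochain dim F 0,
          f ∈ FK.cocycles dim F sgn res 0 → f ∉ FK.coboundariesSet dim F sgn res 0 →
          E''' * (E * ε - α) / β ≤ FK.cnorm dim F w f := by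
  have hL0 : 0 < L := by linarith
  have hC : 0 < L ^ 2 * (Fc + 1) := by positivity
  refine ⟨1 / (L ^ 2 * (Fc + 1)), 1, by positivity, one_pos, ?_⟩
  intro V _ _ dim d bot hP _ hLX hFc w hw R _ sgn hsgn F _ _ res hres ε α β _ _ hβ hcbe hexp f hf
    hfB
  set W := FK.wsum w (FK.support f)
  have hW : 0 < W := FK.wsum_support_pos hw.pos (FK.ne_zero_of_notMem_coboundariesSet hfB)
  have hT : 0 ≤ FK.wsum w (FK.innerEdges dim (FK.support f)) :=
    Finset.sum_nonneg fun e _ => (hw.pos e).le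
  have hεW : ε * W ≤ L ^ 2 * (Fc + 1) * (α * W + β * W ^ 2) :=
    calc ε * W ≤ L ^ 2 * (Fc * FK.wsum w (FK.innerEdges dim (FK.support f))) :=
          FK.mul_wsum_support_le hP hw hL0.le hLX hsgn hres hFc hcbe hf
      _ ≤ L ^ 2 * (Fc + 1) * FK.wsum w (FK.innerEdges dim (FK.support f)) := by nlinarith
      _ ≤ L ^ 2 * (Fc + 1) * (α * W + β * W ^ 2) :=
          mul_le_mul_of_nonneg_left (hexp _ (FK.support_subset_faces f)) hC.le
  have hε : ε ≤ L ^ 2 * (Fc + 1) * (α + β * W) :=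
    le_of_mul_le_mul_right (by linarith) hW
  have hEε : 1 / (L ^ 2 * (Fc + 1)) * ε ≤ α + β * W := by
    rw [one_div_mul_eq_div, div_le_iff₀ hC]
    linarith
  rw [FK.cnorm_eq_wsum_support, one_mul, div_le_iff₀ hβ]
  linarith
end
end

section
/- Let R be a commutative ring, let X be a d-poset with a weight function w : X → ℝ_{>0} and an R-orientation, and let 𝓕 be an R-sheaf on X. Let k ∈ {0,…,d}, let f, g ∈ C^k(X,𝓕) satisfy g(x) ∈ {f(x), 0} for every x ∈ X(k), let q ∈ [0,1], and let u ∈ X with dim u ≤ k. If f is mock q-locally minimal at u (i.e., ‖f‖_w ≤ ‖f + b^u‖_w + q·w(u) for every b ∈ B^{k−dim u−1}(X_u,𝓕_u)), then g is mock q-locally minimal at u. -/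
open scoped Classical

noncomputable section

namespace FK

lemma ite_ne_zero_sub_ite_add_ne_zero_le {M : Type*} [AddZeroClass M] {c : ℝ} (hc : 0 ≤ c)
    {a a' : M} (b : M) (ha : a' = a ∨ a' = 0) :
    (if a' ≠ 0 then c else 0) - (if a' + b ≠ 0 then c else 0)
      ≤ (if a ≠ 0 then c else 0) - (if a + b ≠ 0 then c else 0) := by
  rcases ha with rfl | rfl
  · exact le_rfl
  · by_cases hb : b = 0
    · simp [hb]
    · split_ifs <;> simp_all

/-- Where `g` agrees with `f`, adding `B` changes both norms alike; where `g` vanishes, adding `B`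
can only increase the norm of `g`, while it decreases that of `f` by at most `w x`. -/
lemma cnorm_sub_cnorm_add_le {V : Type*} [Fintype V] [PartialOrder V] {dim : V → ℤ}
    {F : V → Type*} [∀ x, AddCommGroup (F x)] {w : V → ℝ} (hw : ∀ x, 0 ≤ w x) {i : ℤ}
    {f g : Cochain dim F i} (hg : ∀ x, g x = f x ∨ g x = 0) (B : Cochain dim F i) :
    cnorm dim F w g - cnorm dim F w (g + B) ≤ cnorm dim F w f - cnorm dim F w (f + B) := by
  simp only [cnorm, ← Finset.sum_sub_distrib]
  exact Finset.sum_le_sum fun x _ => ite_ne_zero_sub_ite_add_ne_zero_le (hw x.1) (B x) (hg x)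

end FK

theorem statement5_general
    (V : Type) [Fintype V] [PartialOrder V] (dim : V → ℤ)
    (w : V → ℝ) (hw : ∀ x : V, 0 < w x)
    (R : Type) [CommRing R] (sgn : V → V → R)
    (F : V → Type) [∀ x, AddCommGroup (F x)] [∀ x, Module R (F x)]
    (res : ∀ x y : V, x ≤ y → (F x →ₗ[R] F y))
    (k : ℕ)
    (f g : FK.Cochain dim F (k : ℤ))
    (hg : ∀ x, g x = f x ∨ g x = 0)
    (q : ℝ)
    (u : V)
    (hf : FK.MockMinAt dim F sgn res w q (k : ℤ) f u) :
    FK.MockMinAt dim F sgn res w q (k : ℤ) g u := by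
  intro b
  have hgain := FK.cnorm_sub_cnorm_add_le (fun x => (hw x).le) hg
    (FK.extendByZero dim F u (FK.lcoboundary dim F sgn res u ((k : ℤ) - 1) k b))
  linarith [hf b]

/-- restricting a cochain preserves mock `q`-local minimality at a face. -/
theorem statement5
    (V : Type) [Fintype V] [PartialOrder V] (dim : V → ℤ) (d : ℤ) (bot : V)
    (hX : FK.IsDPoset dim d bot)
    (w : V → ℝ) (hw : ∀ x : V, 0 < w x)
    (R : Type) [CommRing R] (sgn : V → V → R) (hsgn : FK.IsOrientation R dim sgn)
    (F : V → Type) [∀ x, AddCommGroup (F x)] [∀ x, Module R (F x)]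
    (res : ∀ x y : V, x ≤ y → (F x →ₗ[R] F y)) (hres : FK.IsSheafRes R F res)
    (k : ℕ) (hk : (k : ℤ) ≤ d)
    (f g : FK.Cochain dim F (k : ℤ))
    (hg : ∀ x, g x = f x ∨ g x = 0)
    (q : ℝ) (hq : q ∈ Set.Icc (0 : ℝ) 1)
    (u : V) (hu : dim u ≤ (k : ℤ))
    (hf : FK.MockMinAt dim F sgn res w q (k : ℤ) f u) :
    FK.MockMinAt dim F sgn res w q (k : ℤ) g u :=
  statement5_general V dim w hw R sgn F res k f g hg q u hf
end
end

section
/- Let G be a finite group, A, B ⊆ G∖{1} symmetric generating sets with gag^{−1} ≠ b for all a ∈ A, b ∈ B, g ∈ G, let 𝔽 be a finite field, and let C_A ⊆ 𝔽^A, C_B ⊆ 𝔽^B be linear codes. Let Z^0 ⊆ (C_A⊗C_B)^G be the 𝔽-subspace of ensembles (m_g)_{g∈G} satisfying r_a(m_g) = r_{a^{−1}}(m_{ag}) and c_b(m_g) = c_{b^{−1}}(m_{gb}) for all g ∈ G, a ∈ A, b ∈ B. Then dim_𝔽 Z^0 ≥ |A||B||G|·(r(C_A)·r(C_B) − 3/4),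 where r(C_A) = dim_𝔽 C_A/|A| and r(C_B) = dim_𝔽 C_B/|B|; equivalently, the rate of the code Z^0 ⊆ Σ^G with alphabet Σ = C_A⊗C_B satisfies r(Z^0) ≥ (4·r(C_A)·r(C_B) − 3)/(4·r(C_A)·r(C_B)). -/
open scoped Classical

noncomputable section

namespace FK6

variable {𝔽 : Type*} [Field 𝔽]

/-- The tensor code `C_A ⊗ C_B`, viewed as the space of matrices all of whose rows lie
in `C_B` and all of whose columns lie in `C_A`. -/
def tensorCode {A B : Type*} (CA : Submodule 𝔽 (A → 𝔽)) (CB : Submodule 𝔽 (B → 𝔽)) :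
    Submodule 𝔽 (A → B → 𝔽) where
  carrier := {m | (∀ a : A, m a ∈ CB) ∧ ∀ b : B, (fun a => m a b) ∈ CA}
  add_mem' := by
    intro m₁ m₂ h₁ h₂
    exact ⟨fun a => CB.add_mem (h₁.1 a) (h₂.1 a), fun b => CA.add_mem (h₁.2 b) (h₂.2 b)⟩
  zero_mem' := ⟨fun a => CB.zero_mem, fun b => CA.zero_mem⟩
  smul_mem' := by
    intro c m hm
    exact ⟨fun a => CB.smul_mem c (hm.1 a), fun b => CA.smul_mem c (hm.2 b)⟩

/-- `κ`-agreement testability of the tensor code `C_A ⊗ C_B`. -/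
def AgreementTestable {A B : Type*} [Fintype A] [Fintype B]
    (CA : Submodule 𝔽 (A → 𝔽)) (CB : Submodule 𝔽 (B → 𝔽)) (κ : ℝ) : Prop :=
  ∀ m₁ m₂ : A → B → 𝔽,
    (∀ b : B, (fun a => m₁ a b) ∈ CA) → (∀ a : A, m₂ a ∈ CB) →
    ∃ m ∈ tensorCode CA CB,
      κ * (((Finset.univ.filter fun a : A => m₂ a ≠ m a).card : ℝ) /
            (2 * (Fintype.card A : ℝ)) +
          ((Finset.univ.filter fun b : B => (fun a => m₁ a b) ≠ fun a => m a b).card : ℝ) /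
            (2 * (Fintype.card B : ℝ)))
        ≤ ((Finset.univ.filter fun p : A × B => m₁ p.1 p.2 ≠ m₂ p.1 p.2).card : ℝ) /
            ((Fintype.card A : ℝ) * (Fintype.card B : ℝ))

variable {G : Type*} [Group G] [Fintype G] [DecidableEq G]

/-- The `0`-cocycle code `Z⁰(X, 𝓕)` of the sheaf `𝓕` on the double Cayley complex
`Cay(A, G, B)`: ensembles of tensor codewords satisfying
`r_a(m_g) = r_{a⁻¹}(m_{ag})` and `c_b(m_g) = c_{b⁻¹}(m_{gb})`. -/
def Z0 (A B : Finset G) (CA : Submodule 𝔽 (↥A → 𝔽)) (CB : Submodule 𝔽 (↥B → 𝔽))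
    (hA : ∀ a ∈ A, a⁻¹ ∈ A) (hB : ∀ b ∈ B, b⁻¹ ∈ B) :
    Submodule 𝔽 (G → ↥A → ↥B → 𝔽) where
  carrier := {m | (∀ g : G, m g ∈ tensorCode CA CB) ∧
    ∀ (g : G) (a : ↥A) (b : ↥B),
      m g a b = m ((a : G) * g) ⟨(a : G)⁻¹, hA _ a.2⟩ b ∧
      m g a b = m (g * (b : G)) a ⟨(b : G)⁻¹, hB _ b.2⟩}
  add_mem' := by
    intro m₁ m₂ h₁ h₂
    refine ⟨fun g => (tensorCode CA CB).add_mem (h₁.1 g) (h₂.1 g), fun g a b => ?_⟩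
    constructor
    · simp only [Pi.add_apply]
      rw [(h₁.2 g a b).1, (h₂.2 g a b).1]
    · simp only [Pi.add_apply]
      rw [(h₁.2 g a b).2, (h₂.2 g a b).2]
  zero_mem' := ⟨fun _ => Submodule.zero_mem _, fun _ _ _ => ⟨rfl, rfl⟩⟩
  smul_mem' := by
    intro c m hm
    refine ⟨fun g => (tensorCode CA CB).smul_mem c (hm.1 g), fun g a b => ?_⟩
    constructor
    · simp only [Pi.smul_apply]
      rw [(hm.2 g a b).1]
    · simp only [Pi.smul_apply]
      rw [(hm.2 g a b).2]

/-- The set of edges of the double Cayley complex `Cay(A, G, B)` whose constraint is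
violated by the word `f`. -/
def violatedEdges (A B : Finset G) (hA : ∀ a ∈ A, a⁻¹ ∈ A) (hB : ∀ b ∈ B, b⁻¹ ∈ B)
    (f : G → ↥A → ↥B → 𝔽) : Finset (Finset G) :=
  Finset.univ.filter fun e =>
    (∃ (g : G) (a : ↥A), e = {g, (a : G) * g} ∧
        f g a ≠ f ((a : G) * g) ⟨(a : G)⁻¹, hA _ a.2⟩) ∨
    ∃ (g : G) (b : ↥B), e = {g, g * (b : G)} ∧
        (fun a => f g a b) ≠ fun a => f (g * (b : G)) a ⟨(b : G)⁻¹, hB _ b.2⟩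

/-- The left Cayley graph `Cay(A, G)`, with its natural weight function, is a
`λ`-expander: every eigenvalue of its weighted adjacency operator on the space of
mean-zero functions is at most `λ`. -/
def IsLeftCayleyExpander (A : Finset G) (lam : ℝ) : Prop :=
  ∀ (μ : ℝ) (f : G → ℝ), f ≠ 0 → (∑ g : G, f g) = 0 →
    (∀ g : G, (∑ a ∈ A, f (a * g)) / (A.card : ℝ) = μ * f g) → μ ≤ lam

/-- The right Cayley graph `Cay(G, B)`, with its natural weight function, is a
`λ`-expander. -/
def IsRightCayleyExpander (B : Finset G) (lam : ℝ) : Prop :=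
  ∀ (μ : ℝ) (f : G → ℝ), f ≠ 0 → (∑ g : G, f g) = 0 →
    (∀ g : G, (∑ b ∈ B, f (g * b)) / (B.card : ℝ) = μ * f g) → μ ≤ lam

end FK6

/-!
The cocycle conditions say that an ensemble in `Z⁰` is a function on the squares of
`Cay(A, G, B)` whose local view at every vertex is a tensor codeword: the square with corner
`(g, a, b)` is `{g, a g, g b, a g b}`, and the conditions identify its four corners
`(g, a, b)`, `(a g, a⁻¹, b)`, `(g b, a, b⁻¹)`, `(a g b, a⁻¹, b⁻¹)`. Since `1 ∉ A`, `1 ∉ B` and no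
conjugate of an element of `A` lies in `B`, these four corners are distinct, so there are
`N / 4` squares, where `N = |G||A||B|`. Inside `𝔽^(G × A × B)`, of dimension `N`, the space of
ensembles of tensor codewords has dimension at least `|G| dim C_A dim C_B` (as `C_B ⊗ C_A`
embeds into the tensor code) and the space of functions on squares has dimension `N / 4`, so
their intersection has dimension at least `|G| dim C_A dim C_B - 3N / 4`.
-/

namespace FK6

section TensorCode

variable {𝔽 : Type*} [Field 𝔽] {A B : Type*} [Fintype A] [Fintype B]

open TensorProduct in
theorem finrank_mul_finrank_le_finrank_tensorCode (CA : Submodule 𝔽 (A → 𝔽))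
    (CB : Submodule 𝔽 (B → 𝔽)) :
    Module.finrank 𝔽 CA * Module.finrank 𝔽 CB ≤ Module.finrank 𝔽 (tensorCode CA CB) := by
  let Φ : CB ⊗[𝔽] CA →ₗ[𝔽] A → B → 𝔽 :=
    (piScalarRight 𝔽 𝔽 (B → 𝔽) A).toLinearMap ∘ₗ mapIncl CB CA
  have hΦ : Function.Injective Φ :=
    (piScalarRight 𝔽 𝔽 (B → 𝔽) A).injective.comp
      (Module.Flat.tensorProduct_mapIncl_injective_of_right CB CA)
  have hrange : LinearMap.range Φ ≤ tensorCode CA CB := by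
    rintro _ ⟨x, rfl⟩
    induction x using TensorProduct.induction_on with
    | zero => simp only [map_zero]; exact (tensorCode CA CB).zero_mem
    | tmul v u =>
      simp only [Φ, LinearMap.comp_apply, LinearEquiv.coe_coe, map_tmul, Submodule.subtype_apply,
        piScalarRight_apply, piScalarRightHom_tmul]
      refine ⟨fun a => CB.smul_mem _ v.2, fun b => ?_⟩
      convert CA.smul_mem ((v : B → 𝔽) b) u.2 using 1
      ext a
      exact mul_comm _ _
    | add x y hx hy => simpa using (tensorCode CA CB).add_mem hx hy
  calc Module.finrank 𝔽 CA * Module.finrank 𝔽 CB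
      = Module.finrank 𝔽 (CB ⊗[𝔽] CA) := by rw [Module.finrank_tensorProduct, mul_comm]
    _ = Module.finrank 𝔽 (LinearMap.range Φ) := (LinearMap.finrank_range_of_inj hΦ).symm
    _ ≤ _ := Submodule.finrank_mono hrange

end TensorCode

theorem finrank_add_finrank_le_finrank_inf_add_finrank {K V : Type*} [DivisionRing K]
    [AddCommGroup V] [Module K V] [FiniteDimensional K V] (p q : Submodule K V) :
    Module.finrank K p + Module.finrank K q ≤ Module.finrank K ↥(p ⊓ q) + Module.finrank K V := by
  rw [← Submodule.finrank_sup_add_finrank_inf_eq, add_comm]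
  exact Nat.add_le_add_left (Submodule.finrank_le _) _

theorem card_mul_finrank_div_card {K ι : Type*} [Field K] [Fintype ι]
    (C : Submodule K (ι → K)) :
    (Fintype.card ι : ℝ) * (Module.finrank K C / Fintype.card ι) = Module.finrank K C := by
  refine mul_div_cancel_of_imp' fun hι => ?_
  have hC : Module.finrank K C ≤ Fintype.card ι :=
    (Submodule.finrank_le C).trans_eq (Module.finrank_fintype_fun_eq_card K)
  exact_mod_cast Nat.eq_zero_of_le_zero (hC.trans_eq (by exact_mod_cast hι))

section Counting

variable {X : Type*} [Fintype X]

theorem card_eq_mul_card_quotient (r : Setoid X) {n : ℕ}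
    (hn : ∀ x, (Finset.univ.filter fun y => r y x).card = n) :
    Fintype.card X = n * Fintype.card (Quotient r) := by
  rw [← Finset.card_univ, Finset.card_eq_sum_card_fiberwise (f := Quotient.mk r)
    (t := Finset.univ) (fun _ _ => Finset.mem_univ _), Finset.sum_congr rfl (g := fun _ => n),
    Finset.sum_const, Finset.card_univ, smul_eq_mul, mul_comm]
  intro q _
  obtain ⟨x, rfl⟩ := Quotient.exists_rep q
  simpa only [Quotient.eq] using hn x

def kleinSetoid {s t : X → X} (hs : Function.Involutive s) (ht : Function.Involutive t)
    (hst : Function.Commute s t) : Setoid X where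
  r x y := x = y ∨ x = s y ∨ x = t y ∨ x = s (t y)
  iseqv := by
    refine ⟨fun x => Or.inl rfl, ?_, ?_⟩
    · rintro x y (rfl | rfl | rfl | rfl) <;> simp [hs _, ht _, hst _]
    · rintro x y z (rfl | rfl | rfl | rfl) (rfl | rfl | rfl | rfl) <;> simp [hs _, ht _, hst _]

theorem card_eq_four_mul_card_quotient_kleinSetoid [DecidableEq X] {s t : X → X}
    (hs : Function.Involutive s) (ht : Function.Involutive t) (hst : Function.Commute s t)
    (hs₁ : ∀ x, s x ≠ x) (ht₁ : ∀ x, t x ≠ x) (hs_ne_t : ∀ x, s x ≠ t x)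
    (hst₁ : ∀ x, s (t x) ≠ x) :
    Fintype.card X = 4 * Fintype.card (Quotient (kleinSetoid hs ht hst)) := by
  refine card_eq_mul_card_quotient _ fun x => ?_
  have horbit : (Finset.univ.filter fun y => kleinSetoid hs ht hst y x) =
      {x, s x, t x, s (t x)} := by
    ext y
    simp only [Finset.mem_filter, Finset.mem_univ, true_and, Finset.mem_insert,
      Finset.mem_singleton]
    rfl
  have hsx_ne_stx : s x ≠ s (t x) := hs.injective.ne (ht₁ x).symm
  rw [horbit, Finset.card_insert_of_notMem, Finset.card_insert_of_notMem,
    Finset.card_pair] <;> grind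

end Counting

section Squares

variable {G : Type*} [Group G] {A B : Finset G}

def leftStep (hA : ∀ a ∈ A, a⁻¹ ∈ A) (x : G × A × B) : G × A × B :=
  ((x.2.1 : G) * x.1, ⟨(x.2.1 : G)⁻¹, hA _ x.2.1.2⟩, x.2.2)

def rightStep (hB : ∀ b ∈ B, b⁻¹ ∈ B) (x : G × A × B) : G × A × B :=
  (x.1 * (x.2.2 : G), x.2.1, ⟨(x.2.2 : G)⁻¹, hB _ x.2.2.2⟩)

variable (hA : ∀ a ∈ A, a⁻¹ ∈ A) (hB : ∀ b ∈ B, b⁻¹ ∈ B)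

theorem involutive_leftStep : Function.Involutive (leftStep (B := B) hA) := by
  rintro ⟨g, a, b⟩
  simp [leftStep]

theorem involutive_rightStep : Function.Involutive (rightStep (A := A) hB) := by
  rintro ⟨g, a, b⟩
  simp [rightStep, mul_assoc]

theorem commute_leftStep_rightStep : Function.Commute (leftStep hA) (rightStep hB) := by
  rintro ⟨g, a, b⟩
  simp [leftStep, rightStep, mul_assoc]

/-- The squares of `Cay(A, G, B)`: the corner `(g, a, b)` stands for the square
`{g, a g, g b, a g b}` seen from its vertex `g`. -/
def squareSetoid : Setoid (G × A × B) :=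
  kleinSetoid (involutive_leftStep hA) (involutive_rightStep hB)
    (commute_leftStep_rightStep hA hB)

theorem leftStep_ne_self (hA1 : (1 : G) ∉ A) (x : G × A × B) : leftStep hA x ≠ x := by
  obtain ⟨g, a, b⟩ := x
  intro h
  have hag : (a : G) * g = g := congrArg Prod.fst h
  exact hA1 (mul_eq_right.mp hag ▸ a.2)

theorem rightStep_ne_self (hB1 : (1 : G) ∉ B) (x : G × A × B) : rightStep hB x ≠ x := by
  obtain ⟨g, a, b⟩ := x
  intro h
  have hgb : g * (b : G) = g := congrArg Prod.fst h
  exact hB1 (mul_eq_left.mp hgb ▸ b.2)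

variable {hA hB}

theorem leftStep_ne_rightStep (hconj : ∀ g : G, ∀ a ∈ A, ∀ b ∈ B, g * a * g⁻¹ ≠ b)
    (x : G × A × B) : leftStep hA x ≠ rightStep hB x := by
  obtain ⟨g, a, b⟩ := x
  intro h
  have hag : (a : G) * g = g * b := congrArg Prod.fst h
  exact hconj g⁻¹ a a.2 b b.2 (by rw [inv_inv, mul_assoc, hag]; group)

theorem leftStep_rightStep_ne_self (hconj : ∀ g : G, ∀ a ∈ A, ∀ b ∈ B, g * a * g⁻¹ ≠ b)
    (x : G × A × B) : leftStep hA (rightStep hB x) ≠ x := by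
  obtain ⟨g, a, b⟩ := x
  intro h
  have hagb : (a : G) * (g * b) = g := congrArg Prod.fst h
  have hag : (a : G) * g = g * (b : G)⁻¹ := by rw [eq_mul_inv_iff_mul_eq, mul_assoc, hagb]
  exact hconj g⁻¹ a a.2 b⁻¹ (hB _ b.2) (by rw [inv_inv, mul_assoc, hag]; group)

variable (hA hB)

theorem card_mul_card_mul_card_eq_four_mul_card_squares [Fintype G] (hA1 : (1 : G) ∉ A)
    (hB1 : (1 : G) ∉ B) (hconj : ∀ g : G, ∀ a ∈ A, ∀ b ∈ B, g * a * g⁻¹ ≠ b) :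
    Fintype.card G * (A.card * B.card) = 4 * Fintype.card (Quotient (squareSetoid hA hB)) := by
  rw [squareSetoid, ← card_eq_four_mul_card_quotient_kleinSetoid _ _ _ (leftStep_ne_self hA hA1)
    (rightStep_ne_self hB hB1) (leftStep_ne_rightStep hconj) (leftStep_rightStep_ne_self hconj),
    Fintype.card_prod, Fintype.card_prod, Fintype.card_coe, Fintype.card_coe]

variable (𝔽 : Type*) [Field 𝔽]

def ofSquareFun : (Quotient (squareSetoid hA hB) → 𝔽) →ₗ[𝔽] G → A → B → 𝔽 where
  toFun h g a b := h ⟦(g, a, b)⟧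
  map_add' _ _ := rfl
  map_smul' _ _ := rfl

theorem injective_ofSquareFun : Function.Injective (ofSquareFun hA hB 𝔽) := by
  intro h₁ h₂ h
  funext q
  obtain ⟨⟨g, a, b⟩, rfl⟩ := Quotient.exists_rep q
  exact congrFun (congrFun (congrFun h g) a) b

theorem range_compLeft_inf_range_ofSquareFun_le_Z0 (CA : Submodule 𝔽 (A → 𝔽))
    (CB : Submodule 𝔽 (B → 𝔽)) :
    LinearMap.range ((tensorCode CA CB).subtype.compLeft G) ⊓
      LinearMap.range (ofSquareFun hA hB 𝔽) ≤ Z0 A B CA CB hA hB := by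
  rintro _ ⟨⟨f, hf⟩, ⟨h, rfl⟩⟩
  refine ⟨fun g => hf ▸ (f g).2, fun g a b => ⟨?_, ?_⟩⟩
  · exact congrArg h (Quotient.sound (Or.inr (Or.inl (involutive_leftStep hA _).symm)))
  · exact congrArg h (Quotient.sound (Or.inr (Or.inr (Or.inl (involutive_rightStep hB _).symm))))

end Squares

theorem four_mul_card_mul_finrank_mul_finrank_le {G : Type*} [Group G] [Fintype G]
    {A B : Finset G} (hA1 : (1 : G) ∉ A) (hB1 : (1 : G) ∉ B) (hA : ∀ a ∈ A, a⁻¹ ∈ A)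
    (hB : ∀ b ∈ B, b⁻¹ ∈ B) (hconj : ∀ g : G, ∀ a ∈ A, ∀ b ∈ B, g * a * g⁻¹ ≠ b)
    {𝔽 : Type*} [Field 𝔽] (CA : Submodule 𝔽 (A → 𝔽)) (CB : Submodule 𝔽 (B → 𝔽)) :
    4 * (Fintype.card G * (Module.finrank 𝔽 CA * Module.finrank 𝔽 CB)) ≤
      4 * Module.finrank 𝔽 (Z0 A B CA CB hA hB) + 3 * (Fintype.card G * (A.card * B.card)) := by
  set T := LinearMap.range ((tensorCode CA CB).subtype.compLeft G)
  set W := LinearMap.range (ofSquareFun hA hB 𝔽)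
  have hT : Fintype.card G * (Module.finrank 𝔽 CA * Module.finrank 𝔽 CB) ≤
      Module.finrank 𝔽 T := by
    rw [LinearMap.finrank_range_of_inj
      fun f₁ f₂ h => funext fun g => Subtype.ext (congrFun h g)]
    simpa [Module.finrank_pi_fintype] using
      Nat.mul_le_mul_left _ (finrank_mul_finrank_le_finrank_tensorCode CA CB)
  have hW : 4 * Module.finrank 𝔽 W = Fintype.card G * (A.card * B.card) := by
    rw [LinearMap.finrank_range_of_inj (injective_ofSquareFun hA hB 𝔽),
      Module.finrank_fintype_fun_eq_card,
      card_mul_card_mul_card_eq_four_mul_card_squares hA hB hA1 hB1 hconj]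
  have hV : Module.finrank 𝔽 (G → A → B → 𝔽) = Fintype.card G * (A.card * B.card) := by
    simp [Module.finrank_pi_fintype]
  have hTW := finrank_add_finrank_le_finrank_inf_add_finrank T W
  rw [hV] at hTW
  have hZ : Module.finrank 𝔽 ↥(T ⊓ W) ≤ Module.finrank 𝔽 (Z0 A B CA CB hA hB) :=
    Submodule.finrank_mono (range_compLeft_inf_range_ofSquareFun_le_Z0 hA hB 𝔽 CA CB)
  omega

end FK6

theorem statement7_general
    (G : Type) [Group G] [Fintype G]
    (A B : Finset G)
    (hA1 : (1 : G) ∉ A) (hB1 : (1 : G) ∉ B)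
    (hAinv : ∀ a ∈ A, a⁻¹ ∈ A) (hBinv : ∀ b ∈ B, b⁻¹ ∈ B)
    (htnc : ∀ (g : G), ∀ a ∈ A, ∀ b ∈ B, g * a * g⁻¹ ≠ b)
    (𝔽 : Type) [Field 𝔽]
    (CA : Submodule 𝔽 (↥A → 𝔽)) (CB : Submodule 𝔽 (↥B → 𝔽)) :
    ((A.card : ℝ) * (B.card : ℝ) * (Fintype.card G : ℝ)) *
        (((Module.finrank 𝔽 ↥CA : ℝ) / (A.card : ℝ)) *
            ((Module.finrank 𝔽 ↥CB : ℝ) / (B.card : ℝ)) - 3 / 4) ≤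
      (Module.finrank 𝔽 ↥(FK6.Z0 A B CA CB hAinv hBinv) : ℝ) := by
  have key : (4 : ℝ) * (Fintype.card G * (Module.finrank 𝔽 CA * Module.finrank 𝔽 CB)) ≤
      4 * Module.finrank 𝔽 (FK6.Z0 A B CA CB hAinv hBinv) +
        3 * (Fintype.card G * (A.card * B.card)) := by
    exact_mod_cast FK6.four_mul_card_mul_finrank_mul_finrank_le hA1 hB1 hAinv hBinv htnc CA CB
  have hA := FK6.card_mul_finrank_div_card CA
  have hB := FK6.card_mul_finrank_div_card CB
  rw [Fintype.card_coe] at hA hB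
  calc _ = (Fintype.card G : ℝ) * ((A.card : ℝ) * (Module.finrank 𝔽 CA / A.card)) *
        ((B.card : ℝ) * (Module.finrank 𝔽 CB / B.card)) -
          3 / 4 * (Fintype.card G * (A.card * B.card)) := by ring
    _ ≤ _ := by rw [hA, hB]; linarith

/-- lower bound on the dimension (rate) of the `0`-cocycle code of the
double Cayley complex. -/
theorem statement7
    (G : Type) [Group G] [Fintype G] [DecidableEq G]
    (A B : Finset G)
    (hA1 : (1 : G) ∉ A) (hB1 : (1 : G) ∉ B)
    (hAinv : ∀ a ∈ A, a⁻¹ ∈ A) (hBinv : ∀ b ∈ B, b⁻¹ ∈ B)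
    (hAgen : Subgroup.closure (A : Set G) = ⊤) (hBgen : Subgroup.closure (B : Set G) = ⊤)
    (htnc : ∀ (g : G), ∀ a ∈ A, ∀ b ∈ B, g * a * g⁻¹ ≠ b)
    (𝔽 : Type) [Field 𝔽] [Fintype 𝔽]
    (CA : Submodule 𝔽 (↥A → 𝔽)) (CB : Submodule 𝔽 (↥B → 𝔽)) :
    ((A.card : ℝ) * (B.card : ℝ) * (Fintype.card G : ℝ)) *
        (((Module.finrank 𝔽 ↥CA : ℝ) / (A.card : ℝ)) *
            ((Module.finrank 𝔽 ↥CB : ℝ) / (B.card : ℝ)) - 3 / 4) ≤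
      (Module.finrank 𝔽 ↥(FK6.Z0 A B CA CB hAinv hBinv) : ℝ) :=
  statement7_general G A B hA1 hB1 hAinv hBinv htnc 𝔽 CA CB
end
end

section
/- With the lifted-code setup, let G be a finite graph (multiple edges allowed, no loops) with a labelling ℓ : G(0)∪G(1) → 𝒫([n]) such that ℓ restricts to a bijection G(0) → S and ℓ(e) ⊆ ℓ(v) for every edge e and every endpoint v of e. Suppose every vertex of G belongs to at least d_min ≥ 1 and at most d_max edges. If the 2-query tester T_{G,ℓ} for L has soundness μ ≥ 0, i.e., #{e ∈ G(1) with endpoints u,v : f_{ℓ(u)}|_{ℓ(e)} ≠ f_{ℓ(v)}|_{ℓ(e)}}/|G(1)| ≥ μ·dist(f, L) for every f ∈ ∏_{s∈S} C_s, then the natural tester of C has soundness (k_min·D_min/(k_max·D_max))·(μ/(μ + 2·d_max·d_min^{−1})), i.e., #{s ∈ S : g|_s ∉ C_s}/|S| ≥ (k_min·D_min/(k_max·D_max))·(μ/(μ + 2·d_max/d_min))·dist(g, C) for every g ∈ Σ^n. -/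
/-!
Replace every local view `g|_s` that is not a local codeword by some local codeword, giving an
ensemble `f`, and let `h` be a nearest element of the line code; `h` glues to a codeword `G` of
the lifted code. An edge on which `f` is inconsistent has an endpoint `s` with `g|_s ∉ C_s`, so
soundness of the 2-query tester and the handshake bound `d_min |S| ≤ 2 |G(1)|` give
`μ d_min · #{s : f_s ≠ h_s} ≤ 2 d_max · #{s : g|_s ∉ C_s}`. Each coordinate where `g` and `G`
differ lies in at least `D_min` sets `s` with `g|_s ≠ G|_s`; such an `s` has at most `k_max`
elements and either `f_s ≠ h_s` or `g|_s ∉ C_s`. Double counting `|S| k_min ≤ n D_max` converts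
the resulting bound on `n · dist(g, C)` into one relative to `|S|`.
-/

open scoped Classical

noncomputable section

namespace LC

variable {n : ℕ} {Sig : Type*}

/-- Restriction of a word to a subset of coordinates. -/
def restrict (g : Fin n → Sig) (s : Finset (Fin n)) : ↥s → Sig := fun i => g i.1

/-- The lifted code determined by the family of small codes `Cs`. -/
def liftedCode (S : Finset (Finset (Fin n))) (Cs : ∀ s : Finset (Fin n), Set (↥s → Sig)) :
    Set (Fin n → Sig) :=
  {g | ∀ s ∈ S, restrict g s ∈ Cs s}

/-- Ensembles of local words, indexed by the members of `S`. -/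
abbrev Ensemble (S : Finset (Finset (Fin n))) (Sig : Type*) : Type _ :=
  ∀ s : {s : Finset (Fin n) // s ∈ S}, (↥s.1 → Sig)

/-- The line code of the lifted code `C({Cs})`. -/
def lineCode (S : Finset (Finset (Fin n))) (Cs : ∀ s : Finset (Fin n), Set (↥s → Sig)) :
    Set (Ensemble S Sig) :=
  {f | (∀ s, f s ∈ Cs s.1) ∧
    ∀ (s s' : {s : Finset (Fin n) // s ∈ S}) (i : Fin n) (hi : i ∈ s.1) (hi' : i ∈ s'.1),
      f s ⟨i, hi⟩ = f s' ⟨i, hi'⟩}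

/-- Normalized Hamming distance on `Sig^n`. -/
def hdist (g g' : Fin n → Sig) : ℝ :=
  ((Finset.univ.filter fun i => g i ≠ g' i).card : ℝ) / (n : ℝ)

/-- Normalized Hamming distance on ensembles. -/
def edist {S : Finset (Finset (Fin n))} (f f' : Ensemble S Sig) : ℝ :=
  ((Finset.univ.filter fun s : {s : Finset (Fin n) // s ∈ S} => f s ≠ f' s).card : ℝ) /
    (S.card : ℝ)

/-- Distance from a word to a code. -/
def hdistToCode (g : Fin n → Sig) (C : Set (Fin n → Sig)) : ℝ :=
  sInf (hdist g '' C)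

/-- Distance from an ensemble to a code of ensembles. -/
def edistToCode {S : Finset (Finset (Fin n))} (f : Ensemble S Sig) (L : Set (Ensemble S Sig)) :
    ℝ :=
  sInf (edist f '' L)

/-- The relative distance of a code: the maximum of the normalized Hamming distance over
distinct pairs of codewords (`0` for a singleton code). -/
def codeDelta {α : Type*} [Fintype α] (C : Set (α → Sig)) : ℝ :=
  sSup {r : ℝ | ∃ u ∈ C, ∃ v ∈ C, u ≠ v ∧
    r = ((Finset.univ.filter fun i => u i ≠ v i).card : ℝ) / (Fintype.card α : ℝ)}

/-- The relative distance of a code of ensembles. -/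
def lineDelta {S : Finset (Finset (Fin n))} (L : Set (Ensemble S Sig)) : ℝ :=
  sSup {r : ℝ | ∃ f ∈ L, ∃ f' ∈ L, f ≠ f' ∧ r = edist f f'}

/-- The members of `S` on which `g` violates the corresponding small code. -/
def natViolations (S : Finset (Finset (Fin n))) (Cs : ∀ s : Finset (Fin n), Set (↥s → Sig))
    (g : Fin n → Sig) : Finset (Finset (Fin n)) :=
  S.filter fun s => restrict g s ∉ Cs s

/-- The edges of the intersection graph of `S`, as two-element sets. -/
def interEdges (S : Finset (Finset (Fin n))) : Finset (Finset (Finset (Fin n))) :=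
  Finset.univ.filter fun E' =>
    ∃ s ∈ S, ∃ s' ∈ S, s ≠ s' ∧ (s ∩ s').Nonempty ∧ E' = {s, s'}

/-- The edges of the intersection graph of `S` on which the ensemble `f` disagrees. -/
def interViolated (S : Finset (Finset (Fin n)))
    (f : Ensemble S Sig) : Finset (Finset (Finset (Fin n))) :=
  Finset.univ.filter fun E' =>
    ∃ (s : Finset (Fin n)) (hs : s ∈ S) (s' : Finset (Fin n)) (hs' : s' ∈ S),
      s ≠ s' ∧ (s ∩ s').Nonempty ∧ E' = {s, s'} ∧
      (fun i : ↥(s ∩ s') => f ⟨s, hs⟩ ⟨i.1, Finset.mem_of_mem_inter_left i.2⟩) ≠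
        fun i : ↥(s ∩ s') => f ⟨s', hs'⟩ ⟨i.1, Finset.mem_of_mem_inter_right i.2⟩

end LC

open Finset

namespace LC

variable {n : ℕ} {Sig : Type*}

lemma card_filter_comp_equiv {α V : Type*} [Fintype V] {S : Finset α} (e : V ≃ {a // a ∈ S})
    (p : α → Prop) [DecidablePred p] : #{v | p (e v).1} = #{a ∈ S | p a} := by
  refine card_bij (fun v _ => (e v).1) (fun v hv => ?_) (fun v _ w _ hvw => ?_) fun a ha => ?_
  · exact mem_filter.2 ⟨(e v).2, (mem_filter.1 hv).2⟩
  · exact e.injective (Subtype.ext hvw)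
  · obtain ⟨haS, hpa⟩ := mem_filter.1 ha
    exact ⟨e.symm ⟨a, haS⟩, by simpa using hpa, by simp⟩

lemma card_mul_le_card_filter_mul {α : Type*} [DecidableEq α] {A : Finset α}
    {S : Finset (Finset α)} {D k : ℕ} {p : Finset α → Prop} [DecidablePred p]
    (hD : ∀ a ∈ A, D ≤ #{s ∈ S | a ∈ s})
    (hk : ∀ s ∈ S, #s ≤ k) (hp : ∀ s ∈ S, ¬Disjoint A s → p s) :
    #A * D ≤ #{s ∈ S | p s} * k :=
  calc #A * D ≤ ∑ s ∈ S, #(A ∩ s) := le_sum_card_inter hD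
    _ = ∑ s ∈ S with p s, #(A ∩ s) := by
      refine (sum_filter_of_ne fun s hs hne => hp s hs ?_).symm
      rwa [Ne, card_eq_zero, ← disjoint_iff_inter_eq_empty] at hne
    _ ≤ ∑ s ∈ S with p s, k :=
      sum_le_sum fun s hs => (card_le_card inter_subset_right).trans (hk s (mem_filter.1 hs).1)
    _ = #{s ∈ S | p s} * k := by rw [sum_const, smul_eq_mul]

section Graph

variable {V E : Type*} [Fintype V] [Fintype E] [DecidableEq V] (ep : E → V × V)

lemma sum_card_incident_le :
    ∑ v, #{e | (ep e).1 = v ∨ (ep e).2 = v} ≤ 2 * Fintype.card E := by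
  simp_rw [card_filter]
  rw [sum_comm, ← card_univ, card_eq_sum_ones, mul_sum, mul_one]
  refine sum_le_sum fun e _ => ?_
  rw [← card_filter]
  calc #{v | (ep e).1 = v ∨ (ep e).2 = v} = #{(ep e).1, (ep e).2} := by congr 1; ext; simp [eq_comm]
    _ ≤ 2 := card_le_two

lemma mul_card_le_two_mul_card {d : ℕ} (hd : ∀ v, d ≤ #{e | (ep e).1 = v ∨ (ep e).2 = v}) :
    d * Fintype.card V ≤ 2 * Fintype.card E :=
  calc d * Fintype.card V = ∑ _v : V, d := by rw [sum_const, card_univ, smul_eq_mul, mul_comm]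
    _ ≤ _ := (sum_le_sum fun v _ => hd v).trans (sum_card_incident_le ep)

lemma card_le_card_filter_mul_of_incident {p : V → Prop} [DecidablePred p] {F : Finset E}
    {d : ℕ} (hF : ∀ e ∈ F, p (ep e).1 ∨ p (ep e).2)
    (hd : ∀ v, #{e | (ep e).1 = v ∨ (ep e).2 = v} ≤ d) :
    #F ≤ #{v | p v} * d :=
  calc #F ≤ #(({v | p v} : Finset V).biUnion fun v => {e | (ep e).1 = v ∨ (ep e).2 = v}) :=
        card_le_card fun e he => by
          rcases hF e he with h | h
          exacts [mem_biUnion.2 ⟨_, mem_filter.2 ⟨mem_univ _, h⟩, by simp⟩,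
            mem_biUnion.2 ⟨_, mem_filter.2 ⟨mem_univ _, h⟩, by simp⟩]
    _ ≤ ∑ v with p v, #{e | (ep e).1 = v ∨ (ep e).2 = v} := card_biUnion_le
    _ ≤ #{v | p v} * d := (sum_le_sum fun v _ => hd v).trans (by rw [sum_const, smul_eq_mul])

end Graph

lemma hdistToCode_nonneg (g : Fin n → Sig) (C : Set (Fin n → Sig)) : 0 ≤ hdistToCode g C :=
  Real.sInf_nonneg (by rintro _ ⟨G, -, rfl⟩; unfold hdist; positivity)

lemma hdistToCode_mul_le {g G : Fin n → Sig} {C : Set (Fin n → Sig)} (hG : G ∈ C) :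
    hdistToCode g C * n ≤ #{i | g i ≠ G i} := by
  have hbdd : BddBelow (hdist g '' C) := ⟨0, by rintro _ ⟨G, -, rfl⟩; unfold hdist; positivity⟩
  calc hdistToCode g C * n ≤ hdist g G * n := by gcongr; exact csInf_le hbdd ⟨G, hG, rfl⟩
    _ = #{i | g i ≠ G i} := div_mul_cancel_of_imp fun hn => by
        rw [Nat.cast_eq_zero] at hn; subst hn; simp

lemma exists_edist_eq_edistToCode {S : Finset (Finset (Fin n))} (f : Ensemble S Sig)
    {L : Set (Ensemble S Sig)} (hL : L.Nonempty) : ∃ h ∈ L, edist f h = edistToCode f L :=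
  (hL.image _).csInf_mem <| (Set.finite_range fun T : Finset {s // s ∈ S} => (#T : ℝ) / #S).subset
    (by rintro _ ⟨h, -, rfl⟩; exact ⟨_, rfl⟩)

section Codes

variable {S : Finset (Finset (Fin n))} {Cs : ∀ s : Finset (Fin n), Set (↥s → Sig)}

lemma restrict_mem_lineCode {g : Fin n → Sig} (hg : g ∈ liftedCode S Cs) :
    (fun s => restrict g s.1 : Ensemble S Sig) ∈ lineCode S Cs :=
  ⟨fun s => hg s.1 s.2, fun _ _ _ _ _ => rfl⟩

def glue (f : Ensemble S Sig) (g₀ : Fin n → Sig) : Fin n → Sig := fun i =>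
  if h : ∃ s ∈ S, i ∈ s then f ⟨h.choose, h.choose_spec.1⟩ ⟨i, h.choose_spec.2⟩ else g₀ i

lemma restrict_glue {f : Ensemble S Sig} (hf : f ∈ lineCode S Cs) (g₀ : Fin n → Sig)
    (s : {s // s ∈ S}) : restrict (glue f g₀) s.1 = f s := by
  funext ⟨i, hi⟩
  have h : ∃ s ∈ S, i ∈ s := ⟨s.1, s.2, hi⟩
  simp only [restrict, glue, dif_pos h]
  exact hf.2 _ _ _ _ _

lemma glue_mem_liftedCode {f : Ensemble S Sig} (hf : f ∈ lineCode S Cs) (g₀ : Fin n → Sig) :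
    glue f g₀ ∈ liftedCode S Cs := fun s hs => by
  rw [restrict_glue hf g₀ ⟨s, hs⟩]
  exact hf.1 ⟨s, hs⟩

def localRepair (S : Finset (Finset (Fin n))) (Cs : ∀ s : Finset (Fin n), Set (↥s → Sig))
    (g g₀ : Fin n → Sig) : Ensemble S Sig := fun s =>
  if restrict g s.1 ∈ Cs s.1 then restrict g s.1 else restrict g₀ s.1

lemma localRepair_mem {g g₀ : Fin n → Sig} (hg₀ : g₀ ∈ liftedCode S Cs) (s : {s // s ∈ S}) :
    localRepair S Cs g g₀ s ∈ Cs s.1 := by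
  unfold localRepair
  split_ifs with h
  exacts [h, hg₀ s.1 s.2]

lemma localRepair_of_mem {g g₀ : Fin n → Sig} {s : {s // s ∈ S}} (h : restrict g s.1 ∈ Cs s.1) :
    localRepair S Cs g g₀ s = restrict g s.1 :=
  if_pos h

lemma card_filter_restrict_ne_le {g G g₀ : Fin n → Sig} {h : Ensemble S Sig}
    (hG : ∀ s, restrict G s.1 = h s) :
    #{s ∈ S | restrict g s ≠ restrict G s} ≤
      #{s | localRepair S Cs g g₀ s ≠ h s} + #(natViolations S Cs g) := by
  calc #{s ∈ S | restrict g s ≠ restrict G s}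
      ≤ #(({s | localRepair S Cs g g₀ s ≠ h s} : Finset _).map (Function.Embedding.subtype _) ∪
          natViolations S Cs g) := card_le_card fun s hs => ?_
    _ ≤ _ := (card_union_le _ _).trans (by rw [card_map])
  obtain ⟨hsS, hne⟩ := mem_filter.1 hs
  by_cases hc : restrict g s ∈ Cs s
  · refine mem_union_left _ (mem_map.2 ⟨⟨s, hsS⟩, mem_filter.2 ⟨mem_univ _, ?_⟩, rfl⟩)
    rwa [localRepair_of_mem hc, ← hG]
  · exact mem_union_right _ (mem_filter.2 ⟨hsS, hc⟩)

lemma notMem_or_notMem_of_localRepair_ne {g g₀ : Fin n → Sig} {s t : {s // s ∈ S}}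
    {u : Finset (Fin n)} {hs : u ⊆ s.1} {ht : u ⊆ t.1}
    (hne : (fun i : ↥u => localRepair S Cs g g₀ s ⟨i.1, hs i.2⟩) ≠
      fun i : ↥u => localRepair S Cs g g₀ t ⟨i.1, ht i.2⟩) :
    restrict g s.1 ∉ Cs s.1 ∨ restrict g t.1 ∉ Cs t.1 := by
  by_contra! ⟨hgs, hgt⟩
  exact hne (funext fun i => by rw [localRepair_of_mem hgs, localRepair_of_mem hgt]; rfl)

end Codes

lemma mul_mul_le_of_sound_of_handshake {μ k N m ev v dmin dmax : ℝ} (hμ : 0 ≤ μ) (hk : 0 ≤ k)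
    (hN : 0 < N) (hdmin : 0 < dmin) (hsound : μ * (k / N) ≤ ev / m) (hev : ev ≤ v * dmax)
    (hhand : dmin * N ≤ 2 * m) :
    μ * dmin * k ≤ 2 * dmax * v := by
  have hm : 0 < m := by nlinarith
  rw [← mul_div_assoc, div_le_div_iff₀ hN hm] at hsound
  refine le_of_mul_le_mul_right ?_ hN
  nlinarith [mul_le_mul_of_nonneg_left hhand (mul_nonneg hμ hk)]

lemma lifted_soundness_of_counts {μ d k v N m ev n a kmin kmax Dmin Dmax dmin dmax : ℝ}
    (hμ : 0 ≤ μ) (hd : 0 ≤ d) (hk : 0 ≤ k) (hv : 0 ≤ v) (hN : 0 < N) (hdmin : 0 < dmin)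
    (hdmax : 0 ≤ dmax) (hkmax : 0 ≤ kmax) (hDmin : 0 ≤ Dmin) (hDmax : 0 ≤ Dmax)
    (hsound : μ * (k / N) ≤ ev / m) (hev : ev ≤ v * dmax) (hhand : dmin * N ≤ 2 * m)
    (hdist : d * n ≤ a) (hcoord : a * Dmin ≤ (k + v) * kmax) (hcover : N * kmin ≤ n * Dmax) :
    kmin * Dmin / (kmax * Dmax) * (μ / (μ + 2 * dmax / dmin)) * d ≤ v / N := by
  have htester := mul_mul_le_of_sound_of_handshake hμ hk hN hdmin hsound hev hhand
  have hlhs : kmin * Dmin / (kmax * Dmax) * (μ / (μ + 2 * dmax / dmin)) * d =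
      kmin * Dmin * μ * dmin * d / (kmax * Dmax * (μ * dmin + 2 * dmax)) := by
    field_simp
  rw [hlhs]
  rcases (by positivity : 0 ≤ kmax * Dmax * (μ * dmin + 2 * dmax)).eq_or_lt with h0 | hpos
  · -- a vanishing denominator makes the left side the junk value `x / 0 = 0`
    rw [← h0, div_zero]
    positivity
  rw [div_le_div_iff₀ hpos hN]
  calc kmin * Dmin * μ * dmin * d * N = μ * dmin * (d * (N * kmin)) * Dmin := by ring
    _ ≤ μ * dmin * (d * (n * Dmax)) * Dmin := by gcongr
    _ = μ * dmin * (d * n * Dmax) * Dmin := by ring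
    _ ≤ μ * dmin * (a * Dmax) * Dmin := by gcongr
    _ = μ * dmin * (a * Dmin) * Dmax := by ring
    _ ≤ μ * dmin * ((k + v) * kmax) * Dmax := by gcongr
    _ = (μ * dmin * k + μ * dmin * v) * kmax * Dmax := by ring
    _ ≤ (2 * dmax * v + μ * dmin * v) * kmax * Dmax := by gcongr
    _ = v * (kmax * Dmax * (μ * dmin + 2 * dmax)) := by ring

end LC

theorem statement13_general (n : ℕ) (Sig : Type)
    (S : Finset (Finset (Fin n))) (hS : S.Nonempty)
    (Cs : ∀ s : Finset (Fin n), Set (↥s → Sig))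
    (hCne : (LC.liftedCode S Cs).Nonempty)
    (kmin kmax Dmin Dmax : ℕ)
    (hkmin : (∀ s ∈ S, kmin ≤ s.card) ∧ ∃ s ∈ S, s.card = kmin)
    (hkmax : (∀ s ∈ S, s.card ≤ kmax) ∧ ∃ s ∈ S, s.card = kmax)
    (hDmin : (∀ i : Fin n, Dmin ≤ (S.filter fun s => i ∈ s).card) ∧
      ∃ i : Fin n, (S.filter fun s => i ∈ s).card = Dmin)
    (hDmax : (∀ i : Fin n, (S.filter fun s => i ∈ s).card ≤ Dmax) ∧
      ∃ i : Fin n, (S.filter fun s => i ∈ s).card = Dmax)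
    -- the labelled graph (G, ℓ)
    (V₀ : Type) [Fintype V₀] (E : Type) [Fintype E]
    (ep : E → V₀ × V₀)
    (ℓv : V₀ ≃ {s : Finset (Fin n) // s ∈ S})
    (ℓe : E → Finset (Fin n))
    (hs1 : ∀ e : E, ℓe e ⊆ (ℓv (ep e).1).1)
    (hs2 : ∀ e : E, ℓe e ⊆ (ℓv (ep e).2).1)
    (dmin dmax : ℕ) (hdmin1 : 1 ≤ dmin)
    (hdeg : ∀ v : V₀,
      dmin ≤ (Finset.univ.filter fun e : E => (ep e).1 = v ∨ (ep e).2 = v).card ∧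
        (Finset.univ.filter fun e : E => (ep e).1 = v ∨ (ep e).2 = v).card ≤ dmax)
    (μ : ℝ) (hμ : 0 ≤ μ)
    -- soundness of the 2-query tester T_{G,ℓ} of the line code L
    (hsound : ∀ f : LC.Ensemble S Sig, (∀ s, f s ∈ Cs s.1) →
      μ * LC.edistToCode f (LC.lineCode S Cs) ≤
        ((Finset.univ.filter fun e : E =>
            (fun i : ↥(ℓe e) => f (ℓv (ep e).1) ⟨i.1, hs1 e i.2⟩) ≠
              fun i : ↥(ℓe e) => f (ℓv (ep e).2) ⟨i.1, hs2 e i.2⟩).card : ℝ) /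
          (Fintype.card E : ℝ)) :
    -- soundness of the natural tester of the lifted code C
    ∀ g : Fin n → Sig,
      (kmin : ℝ) * (Dmin : ℝ) / ((kmax : ℝ) * (Dmax : ℝ)) *
            (μ / (μ + 2 * (dmax : ℝ) / (dmin : ℝ))) *
          LC.hdistToCode g (LC.liftedCode S Cs) ≤
        ((LC.natViolations S Cs g).card : ℝ) / (S.card : ℝ) := by
  intro g
  obtain ⟨g₀, hg₀⟩ := hCne
  set f := LC.localRepair S Cs g g₀
  obtain ⟨h, hL, hfh⟩ := LC.exists_edist_eq_edistToCode f ⟨_, LC.restrict_mem_lineCode hg₀⟩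
  set G := LC.glue h g
  have hcoord : #{i | g i ≠ G i} * Dmin ≤ (#{s | f s ≠ h s} + #(LC.natViolations S Cs g)) * kmax :=
    (LC.card_mul_le_card_filter_mul (fun i _ => hDmin.1 i) hkmax.1 fun s _ hs => by
      obtain ⟨i, hi, his⟩ := not_disjoint_iff.1 hs
      exact fun hgG => (mem_filter.1 hi).2 (congrFun hgG ⟨i, his⟩)).trans
      (Nat.mul_le_mul_right kmax (LC.card_filter_restrict_ne_le (LC.restrict_glue hL g)))
  have hsizes : #S * kmin ≤ n * Dmax := calc
    #S * kmin ≤ ∑ s ∈ S, #s := by simpa using card_nsmul_le_sum S card kmin hkmin.1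
    _ ≤ n * Dmax := by simpa using sum_card_le hDmax.1
  have hhand : dmin * #S ≤ 2 * Fintype.card E := by
    simpa [Fintype.card_congr ℓv] using LC.mul_card_le_two_mul_card ep fun v => (hdeg v).1
  have hsnd := hsound f (LC.localRepair_mem hg₀)
  rw [← hfh, LC.edist] at hsnd
  refine LC.lifted_soundness_of_counts hμ (LC.hdistToCode_nonneg _ _) (by positivity)
    (by positivity) (by exact_mod_cast hS.card_pos) (by exact_mod_cast hdmin1) (by positivity)
    (by positivity) (by positivity) (by positivity) hsnd ?_ (by exact_mod_cast hhand)
    (LC.hdistToCode_mul_le (LC.glue_mem_liftedCode hL g)) (by exact_mod_cast hcoord)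
    (by exact_mod_cast hsizes)
  rw [LC.natViolations, ← LC.card_filter_comp_equiv ℓv fun s => LC.restrict g s ∉ Cs s]
  exact_mod_cast LC.card_le_card_filter_mul_of_incident ep
    (fun e he => LC.notMem_or_notMem_of_localRepair_ne (mem_filter.1 he).2) fun v => (hdeg v).2

/-- 2-query testability of the line code implies testability of the lifted
code with its natural tester. -/
theorem statement13 (n : ℕ) (hn : 1 ≤ n) (Sig : Type)
    (S : Finset (Finset (Fin n))) (hS : S.Nonempty)
    (hne : ∀ s ∈ S, s.Nonempty)
    (hcover : ∀ i : Fin n, ∃ s ∈ S, i ∈ s)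
    (Cs : ∀ s : Finset (Fin n), Set (↥s → Sig))
    (hCs : ∀ s ∈ S, (Cs s).Nonempty)
    (hCne : (LC.liftedCode S Cs).Nonempty)
    (kmin kmax Dmin Dmax : ℕ)
    (hkmin : (∀ s ∈ S, kmin ≤ s.card) ∧ ∃ s ∈ S, s.card = kmin)
    (hkmax : (∀ s ∈ S, s.card ≤ kmax) ∧ ∃ s ∈ S, s.card = kmax)
    (hDmin : (∀ i : Fin n, Dmin ≤ (S.filter fun s => i ∈ s).card) ∧
      ∃ i : Fin n, (S.filter fun s => i ∈ s).card = Dmin)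
    (hDmax : (∀ i : Fin n, (S.filter fun s => i ∈ s).card ≤ Dmax) ∧
      ∃ i : Fin n, (S.filter fun s => i ∈ s).card = Dmax)
    -- the labelled graph (G, ℓ)
    (V₀ : Type) [Fintype V₀] (E : Type) [Fintype E]
    (ep : E → V₀ × V₀) (hloop : ∀ e : E, (ep e).1 ≠ (ep e).2)
    (ℓv : V₀ ≃ {s : Finset (Fin n) // s ∈ S})
    (ℓe : E → Finset (Fin n))
    (hs1 : ∀ e : E, ℓe e ⊆ (ℓv (ep e).1).1)
    (hs2 : ∀ e : E, ℓe e ⊆ (ℓv (ep e).2).1)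
    (dmin dmax : ℕ) (hdmin1 : 1 ≤ dmin)
    (hdeg : ∀ v : V₀,
      dmin ≤ (Finset.univ.filter fun e : E => (ep e).1 = v ∨ (ep e).2 = v).card ∧
        (Finset.univ.filter fun e : E => (ep e).1 = v ∨ (ep e).2 = v).card ≤ dmax)
    (μ : ℝ) (hμ : 0 ≤ μ)
    -- soundness of the 2-query tester T_{G,ℓ} of the line code L
    (hsound : ∀ f : LC.Ensemble S Sig, (∀ s, f s ∈ Cs s.1) →
      μ * LC.edistToCode f (LC.lineCode S Cs) ≤
        ((Finset.univ.filter fun e : E =>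
            (fun i : ↥(ℓe e) => f (ℓv (ep e).1) ⟨i.1, hs1 e i.2⟩) ≠
              fun i : ↥(ℓe e) => f (ℓv (ep e).2) ⟨i.1, hs2 e i.2⟩).card : ℝ) /
          (Fintype.card E : ℝ)) :
    -- soundness of the natural tester of the lifted code C
    ∀ g : Fin n → Sig,
      (kmin : ℝ) * (Dmin : ℝ) / ((kmax : ℝ) * (Dmax : ℝ)) *
            (μ / (μ + 2 * (dmax : ℝ) / (dmin : ℝ))) *
          LC.hdistToCode g (LC.liftedCode S Cs) ≤
        ((LC.natViolations S Cs g).card : ℝ) / (S.card : ℝ) :=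
  statement13_general n Sig S hS Cs hCne kmin kmax Dmin Dmax hkmin hkmax hDmin hDmax V₀ E ep ℓv ℓe
    hs1 hs2 dmin dmax hdmin1 hdeg μ hμ hsound
end
end

section
/- With the lifted-code setup, let (G,ℓ) be the intersection graph of S: the simple graph with vertex set S, with an edge {s,s′} whenever s ≠ s′ and s∩s′ ≠ ∅, labelled by ℓ(s) = s and ℓ({s,s′}) = s∩s′; let d_max and d_min ≥ 1 be the maximal and minimal vertex degrees of G. If the natural tester of C has soundness μ ≥ 0, i.e., #{s ∈ S : g|_s ∉ C_s}/|S| ≥ μ·dist(g, C) for every g ∈ Σ^n, then the 2-query tester T_{G,ℓ} for L has soundness D_min·k_min·μ/(d_max·D_max²·k_max²·(μ + D_min^{−1}·D_max·k_max)), i.e., for every f ∈ ∏_{s∈S} C_s, #{{s,s′} ∈ G(1) : f_s|_{s∩s′} ≠ f_{s′}|_{s∩s′}}/|G(1)| ≥ (D_min·k_min·μ/(d_max·D_max²·k_max²·(μ + D_min^{−1}·D_max·k_max)))·dist(f, L). -/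
open scoped Classical

noncomputable section

/-!
Decode `f` to the word `g` with `g i = f s i` for some `s ∋ i`. A member `s` with
`g|_s ≠ f_s` lies on a violated edge of the intersection graph, so at most `2|V|` members are
inconsistent with `g`; as `f_s ∈ C_s`, only those can be rejected by the natural tester, whose
soundness gives `μ · dist(g, C) ≤ 2|V|/|S| ≤ 2 d_max |V|/|E|`. If `h ∈ C` is nearest to `g`, the
ensemble `(h|_s)_s` lies in `L` and differs from `f` only at members inconsistent with `g` or
containing a coordinate where `g` and `h` differ: at most `2|V| + D_max · n · dist(g, h)` of them,
and `n D_min ≤ |S| k_max` by double counting. Eliminating `dist(g, C)` gives the constant, using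
`2 D_min k_min ≤ D_max² k_max²`.
-/

namespace LC

open Finset

variable {n : ℕ} {Sig : Type*} {S : Finset (Finset (Fin n))}

lemma card_interEdges_le {dmax : ℕ}
    (hdeg : ∀ s ∈ S, (S.filter fun s' => s' ≠ s ∧ (s ∩ s').Nonempty).card ≤ dmax) :
    (interEdges S).card ≤ dmax * S.card :=
  calc (interEdges S).card
      ≤ (S.biUnion fun s =>
          (S.filter fun s' => s' ≠ s ∧ (s ∩ s').Nonempty).image
            fun s' => ({s, s'} : Finset (Finset (Fin n)))).card := by
        refine card_le_card fun e he => ?_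
        obtain ⟨-, s, hs, s', hs', hss', hint, rfl⟩ := mem_filter.mp he
        exact mem_biUnion.mpr ⟨s, hs, mem_image.mpr ⟨s', mem_filter.mpr ⟨hs', hss'.symm, hint⟩, rfl⟩⟩
    _ ≤ ∑ s ∈ S, (S.filter fun s' => s' ≠ s ∧ (s ∩ s').Nonempty).card :=
        card_biUnion_le.trans (sum_le_sum fun _ _ => card_image_le)
    _ ≤ S.card * dmax := sum_le_card_nsmul _ _ _ hdeg
    _ = dmax * S.card := mul_comm _ _

lemma mul_le_card_mul_of_forall_le {Dmin kmax : ℕ}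
    (hDmin : ∀ i : Fin n, Dmin ≤ (S.filter fun s => i ∈ s).card)
    (hkmax : ∀ s ∈ S, s.card ≤ kmax) : n * Dmin ≤ S.card * kmax :=
  calc n * Dmin = Fintype.card (Fin n) * Dmin := by rw [Fintype.card_fin]
    _ ≤ ∑ s ∈ S, s.card := le_sum_card hDmin
    _ ≤ S.card * kmax := sum_le_card_nsmul _ _ _ hkmax

lemma two_le_card_filter_mem {s₀ s₁ : Finset (Fin n)} (hs₀ : s₀ ∈ S) (hs₁ : s₁ ∈ S)
    (hne : s₀ ≠ s₁) {i : Fin n} (hi : i ∈ s₀ ∩ s₁) : 2 ≤ (S.filter fun s => i ∈ s).card := by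
  rw [← card_pair hne]
  refine card_le_card fun s hs => ?_
  rcases mem_insert.mp hs with rfl | hs
  · exact mem_filter.mpr ⟨hs₀, (mem_inter.mp hi).1⟩
  · rw [mem_singleton.mp hs]
    exact mem_filter.mpr ⟨hs₁, (mem_inter.mp hi).2⟩

lemma card_filter_restrict_ne_le_s14 {Dmax : ℕ}
    (hDmax : ∀ i : Fin n, (S.filter fun s => i ∈ s).card ≤ Dmax) (g h : Fin n → Sig) :
    (univ.filter fun s : {s // s ∈ S} => restrict g s.1 ≠ restrict h s.1).card ≤
      Dmax * (univ.filter fun i => g i ≠ h i).card :=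
  calc _ ≤ ((univ.filter fun i => g i ≠ h i).biUnion fun i => S.filter fun s => i ∈ s).card := by
        refine card_le_card_of_injOn Subtype.val (fun s hs => ?_) Subtype.val_injective.injOn
        obtain ⟨i, hi⟩ := Function.ne_iff.mp (mem_filter.mp hs).2
        exact mem_biUnion.mpr ⟨i.1, mem_filter.mpr ⟨mem_univ _, hi⟩, mem_filter.mpr ⟨s.2, i.2⟩⟩
    _ ≤ ∑ i ∈ univ.filter fun i => g i ≠ h i, (S.filter fun s => i ∈ s).card := card_biUnion_le
    _ ≤ (univ.filter fun i => g i ≠ h i).card * Dmax := sum_le_card_nsmul _ _ _ fun i _ => hDmax i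
    _ = _ := mul_comm _ _

lemma pair_mem_interEdges {s s' : Finset (Fin n)} (hs : s ∈ S) (hs' : s' ∈ S) (hne : s ≠ s')
    (hint : (s ∩ s').Nonempty) : {s, s'} ∈ interEdges S :=
  mem_filter.mpr ⟨mem_univ _, s, hs, s', hs', hne, hint, rfl⟩

section Ensemble

variable {f : Ensemble S Sig}

lemma card_eq_two_of_mem_interViolated {e : Finset (Finset (Fin n))}
    (he : e ∈ interViolated S f) : e.card = 2 := by
  obtain ⟨-, s, -, s', -, hne, -, rfl, -⟩ := mem_filter.mp he
  exact card_pair hne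

lemma pair_mem_interViolated {s s' : {s // s ∈ S}} {i : Fin n} (hi : i ∈ s.1) (hi' : i ∈ s'.1)
    (hne : f s ⟨i, hi⟩ ≠ f s' ⟨i, hi'⟩) : {s.1, s'.1} ∈ interViolated S f := by
  have hss' : s.1 ≠ s'.1 := by
    intro h
    obtain rfl := Subtype.ext h
    exact hne rfl
  exact mem_filter.mpr ⟨mem_univ _, s.1, s.2, s'.1, s'.2, hss', ⟨i, mem_inter.mpr ⟨hi, hi'⟩⟩, rfl,
    fun heq => hne (congrFun heq ⟨i, mem_inter.mpr ⟨hi, hi'⟩⟩)⟩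

lemma card_le_two_mul_card_interViolated (B : Finset {s // s ∈ S})
    (hB : ∀ s ∈ B, ∃ e ∈ interViolated S f, s.1 ∈ e) :
    B.card ≤ 2 * (interViolated S f).card :=
  calc B.card ≤ ((interViolated S f).biUnion id).card := by
        refine card_le_card_of_injOn Subtype.val (fun s hs => ?_) Subtype.val_injective.injOn
        obtain ⟨e, he, hse⟩ := hB s hs
        exact mem_biUnion.mpr ⟨e, he, hse⟩
    _ ≤ ∑ e ∈ interViolated S f, e.card := card_biUnion_le
    _ = 2 * (interViolated S f).card := by
        rw [sum_congr rfl fun e he => card_eq_two_of_mem_interViolated he, sum_const, smul_eq_mul,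
          mul_comm]

def decode (f : Ensemble S Sig) (hcover : ∀ i : Fin n, ∃ s ∈ S, i ∈ s) : Fin n → Sig :=
  fun i => f ⟨(hcover i).choose, (hcover i).choose_spec.1⟩ ⟨i, (hcover i).choose_spec.2⟩

lemma exists_interViolated_of_restrict_decode_ne {hcover : ∀ i : Fin n, ∃ s ∈ S, i ∈ s}
    {s : {s // s ∈ S}} (hs : restrict (decode f hcover) s.1 ≠ f s) :
    ∃ e ∈ interViolated S f, s.1 ∈ e := by
  obtain ⟨i, hi⟩ := Function.ne_iff.mp hs
  exact ⟨_, pair_mem_interViolated (s' := ⟨_, (hcover i).choose_spec.1⟩) i.2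
    (hcover i).choose_spec.2 (Ne.symm hi), mem_insert_self _ _⟩

lemma card_decode_ne_le (hcover : ∀ i : Fin n, ∃ s ∈ S, i ∈ s) :
    (univ.filter fun s => restrict (decode f hcover) s.1 ≠ f s).card ≤
      2 * (interViolated S f).card :=
  card_le_two_mul_card_interViolated _ fun _ hs =>
    exists_interViolated_of_restrict_decode_ne (mem_filter.mp hs).2

lemma card_natViolations_le {Cs : ∀ s : Finset (Fin n), Set (↥s → Sig)}
    (hf : ∀ s, f s ∈ Cs s.1) (g : Fin n → Sig) :
    (natViolations S Cs g).card ≤ (univ.filter fun s => restrict g s.1 ≠ f s).card := by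
  refine (card_le_card fun s hs => ?_).trans (card_image_le (f := Subtype.val))
  obtain ⟨hsS, hviol⟩ := mem_filter.mp hs
  exact mem_image.mpr ⟨⟨s, hsS⟩, mem_filter.mpr ⟨mem_univ _, fun h => hviol (h ▸ hf ⟨s, hsS⟩)⟩, rfl⟩

lemma card_ne_restrict_le_add (g h : Fin n → Sig) :
    (univ.filter fun s => f s ≠ restrict h s.1).card ≤
      (univ.filter fun s => restrict g s.1 ≠ f s).card +
        (univ.filter fun s : {s // s ∈ S} => restrict g s.1 ≠ restrict h s.1).card := by
  refine (card_le_card fun s => ?_).trans (card_union_le _ _)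
  simp only [mem_filter, mem_univ, true_and, mem_union]
  contrapose!
  rintro ⟨hg, hgh⟩
  rw [← hg, hgh]

end Ensemble

lemma edistToCode_le_edist {Cs : ∀ s : Finset (Fin n), Set (↥s → Sig)} {h : Fin n → Sig}
    (hh : h ∈ liftedCode S Cs) (f : Ensemble S Sig) :
    edistToCode f (lineCode S Cs) ≤ edist f fun s => restrict h s.1 :=
  csInf_le ⟨0, by rintro _ ⟨f', -, rfl⟩; unfold edist; positivity⟩
    ⟨_, ⟨fun s => hh s.1 s.2, fun _ _ _ _ _ => rfl⟩, rfl⟩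

lemma div_le_inv_mul_mul_div {a x N D s k : ℝ} (hax : 0 ≤ a * x) (hN : 0 < N) (hD : 0 < D)
    (hs : 0 < s) (h : N * D ≤ s * k) : a * x / s ≤ D⁻¹ * a * k * (x / N) := by
  rw [div_le_iff₀ hs]
  field_simp
  nlinarith [mul_le_mul_of_nonneg_left h hax]

lemma div_le_mul_div_of_le_mul {x s d E : ℝ} (hx : 0 ≤ x) (hd : 0 ≤ d) (hE : 0 < E)
    (h : E ≤ d * s) : x / s ≤ d * (x / E) := by
  have hs : 0 < s := pos_of_mul_pos_right (hE.trans_le h) hd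
  rw [mul_div_assoc', div_le_div_iff₀ hs hE]
  nlinarith [mul_le_mul_of_nonneg_left h hx]

lemma const_mul_le_of_le_add_mul {Dmin kmin dmax Dmax kmax μ K δ e w : ℝ}
    (hDk : 0 ≤ Dmin * kmin) (hμ : 0 ≤ μ) (hK : 0 ≤ K) (hd : 0 ≤ dmax) (hw : 0 ≤ w)
    (hprod : 2 * Dmin * kmin ≤ Dmax ^ 2 * kmax ^ 2)
    (hδ : μ * δ ≤ dmax * (2 * w)) (he : e ≤ dmax * (2 * w) + K * δ) :
    Dmin * kmin * μ / (dmax * Dmax ^ 2 * kmax ^ 2 * (μ + K)) * e ≤ w := by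
  have hμe : μ * e ≤ (μ + K) * (dmax * (2 * w)) := by
    nlinarith [mul_le_mul_of_nonneg_left he hμ, mul_le_mul_of_nonneg_left hδ hK]
  set Q := dmax * Dmax ^ 2 * kmax ^ 2 * (μ + K)
  obtain hQ | hQ := (show 0 ≤ Q by positivity).eq_or_lt
  · -- the constant is `0` here, by the convention `x / 0 = 0`
    rw [← hQ, div_zero, zero_mul]
    exact hw
  obtain ⟨⟨⟨hd0, hD0⟩, hk0⟩, hμK0⟩ : ((dmax ≠ 0 ∧ Dmax ≠ 0) ∧ kmax ≠ 0) ∧ μ + K ≠ 0 := by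
    simpa only [Q, mul_ne_zero_iff, pow_ne_zero_iff two_ne_zero] using hQ.ne'
  calc Dmin * kmin * μ / Q * e = Dmin * kmin / Q * (μ * e) := by ring
    _ ≤ Dmin * kmin / Q * ((μ + K) * (dmax * (2 * w))) := by gcongr
    _ = 2 * Dmin * kmin / (Dmax ^ 2 * kmax ^ 2) * w := by
        simp only [Q]
        field_simp
    _ ≤ 1 * w := by
        gcongr
        exact div_le_one_of_le₀ hprod (by positivity)
    _ = w := one_mul _

lemma two_mul_mul_le_sq_mul_sq {Dmin Dmax kmin kmax : ℕ} (hD₂ : 2 ≤ Dmax) (hD : Dmin ≤ Dmax)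
    (hk : kmin ≤ kmax) : 2 * Dmin * kmin ≤ Dmax ^ 2 * kmax ^ 2 :=
  calc 2 * Dmin * kmin ≤ Dmax * Dmax * kmax := Nat.mul_le_mul (Nat.mul_le_mul hD₂ hD) hk
    _ ≤ Dmax ^ 2 * kmax ^ 2 := by
        rw [sq]
        exact Nat.mul_le_mul_left _ (Nat.le_self_pow two_ne_zero kmax)

lemma exists_hdist_eq_hdistToCode (g : Fin n → Sig) {C : Set (Fin n → Sig)} (hC : C.Nonempty) :
    ∃ h ∈ C, hdist g h = hdistToCode g C := by
  have hfin : (hdist g '' C).Finite :=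
    (Set.finite_range fun k : Fin (n + 1) => (k : ℝ) / n).subset <| by
      rintro _ ⟨h, -, rfl⟩
      exact ⟨⟨_, Nat.lt_succ_of_le ((card_filter_le _ _).trans_eq (card_fin n))⟩, rfl⟩
  exact (hC.image _).csInf_mem hfin

section Decode

variable {Cs : ∀ s : Finset (Fin n), Set (↥s → Sig)} {f : Ensemble S Sig}
  (hcover : ∀ i : Fin n, ∃ s ∈ S, i ∈ s)

lemma mul_hdistToCode_decode_le {μ : ℝ} (hf : ∀ s, f s ∈ Cs s.1)
    (hsound : ∀ g : Fin n → Sig,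
      μ * hdistToCode g (liftedCode S Cs) ≤ ((natViolations S Cs g).card : ℝ) / (S.card : ℝ)) :
    μ * hdistToCode (decode f hcover) (liftedCode S Cs) ≤
      2 * ((interViolated S f).card : ℝ) / S.card := by
  refine (hsound _).trans (div_le_div_of_nonneg_right ?_ (Nat.cast_nonneg _))
  exact_mod_cast (card_natViolations_le hf _).trans (card_decode_ne_le hcover)

lemma edistToCode_le_decode {Dmin Dmax kmax : ℕ} (hDmin_pos : 0 < Dmin)
    (hDmin : ∀ i : Fin n, Dmin ≤ (S.filter fun s => i ∈ s).card)
    (hDmax : ∀ i : Fin n, (S.filter fun s => i ∈ s).card ≤ Dmax)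
    (hkmax : ∀ s ∈ S, s.card ≤ kmax) (hC : (liftedCode S Cs).Nonempty) :
    edistToCode f (lineCode S Cs) ≤ 2 * ((interViolated S f).card : ℝ) / S.card +
      (Dmin : ℝ)⁻¹ * Dmax * kmax * hdistToCode (decode f hcover) (liftedCode S Cs) := by
  set g := decode f hcover
  obtain ⟨h, hh, hgh⟩ := exists_hdist_eq_hdistToCode g hC
  set Δ := (univ.filter fun i => g i ≠ h i).card
  have hcard : (univ.filter fun s => f s ≠ restrict h s.1).card ≤
      2 * (interViolated S f).card + Dmax * Δ :=
    (card_ne_restrict_le_add g h).trans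
      (add_le_add (card_decode_ne_le hcover) (card_filter_restrict_ne_le_s14 hDmax g h))
  have hcount : (n : ℝ) * Dmin ≤ S.card * kmax := by
    exact_mod_cast mul_le_card_mul_of_forall_le hDmin hkmax
  rw [← hgh]
  calc edistToCode f (lineCode S Cs) ≤ edist f fun s => restrict h s.1 := edistToCode_le_edist hh f
    _ ≤ (2 * ((interViolated S f).card : ℝ) + Dmax * Δ) / S.card := by
        unfold edist
        gcongr
        exact_mod_cast hcard
    _ = 2 * ((interViolated S f).card : ℝ) / S.card + Dmax * Δ / S.card := add_div _ _ _
    _ ≤ 2 * ((interViolated S f).card : ℝ) / S.card + (Dmin : ℝ)⁻¹ * Dmax * kmax * (Δ / n) := by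
        gcongr
        obtain hΔ | hΔ := Nat.eq_zero_or_pos Δ
        · simp [hΔ]
        have hn : 0 < n := hΔ.trans_le ((card_filter_le _ _).trans_eq (card_fin n))
        have hS : 0 < S.card := card_pos.mpr ⟨_, (hcover ⟨0, hn⟩).choose_spec.1⟩
        exact div_le_inv_mul_mul_div (by positivity) (by exact_mod_cast hn)
          (by exact_mod_cast hDmin_pos) (by exact_mod_cast hS) hcount

end Decode

end LC

theorem statement14_general (n : ℕ) (Sig : Type)
    (S : Finset (Finset (Fin n)))
    (hcover : ∀ i : Fin n, ∃ s ∈ S, i ∈ s)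
    (Cs : ∀ s : Finset (Fin n), Set (↥s → Sig))
    (hCne : (LC.liftedCode S Cs).Nonempty)
    (kmin kmax Dmin Dmax : ℕ)
    (hkmin : (∀ s ∈ S, kmin ≤ s.card) ∧ ∃ s ∈ S, s.card = kmin)
    (hkmax : (∀ s ∈ S, s.card ≤ kmax) ∧ ∃ s ∈ S, s.card = kmax)
    (hDmin : (∀ i : Fin n, Dmin ≤ (S.filter fun s => i ∈ s).card) ∧
      ∃ i : Fin n, (S.filter fun s => i ∈ s).card = Dmin)
    (hDmax : (∀ i : Fin n, (S.filter fun s => i ∈ s).card ≤ Dmax) ∧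
      ∃ i : Fin n, (S.filter fun s => i ∈ s).card = Dmax)
    -- degrees of the intersection graph of S
    (dmin dmax : ℕ)
    (hdeg : ∀ s ∈ S,
      dmin ≤ (S.filter fun s' => s' ≠ s ∧ (s ∩ s').Nonempty).card ∧
        (S.filter fun s' => s' ≠ s ∧ (s ∩ s').Nonempty).card ≤ dmax)
    -- the intersection graph has at least one edge
    (hedge : ∃ s ∈ S, ∃ s' ∈ S, s ≠ s' ∧ (s ∩ s').Nonempty)
    (μ : ℝ) (hμ : 0 ≤ μ)
    -- the natural tester of C has soundness μ
    (hsound : ∀ g : Fin n → Sig,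
      μ * LC.hdistToCode g (LC.liftedCode S Cs) ≤
        ((LC.natViolations S Cs g).card : ℝ) / (S.card : ℝ)) :
    -- the 2-query tester T_{G,ℓ} of the line code L has the claimed soundness
    ∀ f : LC.Ensemble S Sig, (∀ s, f s ∈ Cs s.1) →
      (Dmin : ℝ) * (kmin : ℝ) * μ /
            ((dmax : ℝ) * (Dmax : ℝ) ^ 2 * (kmax : ℝ) ^ 2 *
              (μ + (Dmin : ℝ)⁻¹ * (Dmax : ℝ) * (kmax : ℝ))) *
          LC.edistToCode f (LC.lineCode S Cs) ≤
        ((LC.interViolated S f).card : ℝ) / ((LC.interEdges S).card : ℝ) := by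
  intro f hf
  obtain ⟨s₀, hs₀, s₁, hs₁, hs₀₁, i, hi⟩ := hedge
  have hE : (0 : ℝ) < (LC.interEdges S).card := by
    exact_mod_cast Finset.card_pos.mpr ⟨_, LC.pair_mem_interEdges hs₀ hs₁ hs₀₁ ⟨i, hi⟩⟩
  have hviol : 2 * ((LC.interViolated S f).card : ℝ) / S.card ≤
      dmax * (2 * ((LC.interViolated S f).card / (LC.interEdges S).card)) := by
    rw [← mul_div_assoc]
    exact LC.div_le_mul_div_of_le_mul (by positivity) (by positivity) hE
      (by exact_mod_cast LC.card_interEdges_le fun s hs => (hdeg s hs).2)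
  have hDmin_pos : 0 < Dmin := by
    obtain ⟨j, hj⟩ := hDmin.2
    obtain ⟨s, hs, hjs⟩ := hcover j
    exact hj ▸ Finset.card_pos.mpr ⟨s, Finset.mem_filter.mpr ⟨hs, hjs⟩⟩
  have hprod : 2 * (Dmin : ℝ) * kmin ≤ (Dmax : ℝ) ^ 2 * (kmax : ℝ) ^ 2 := by
    exact_mod_cast LC.two_mul_mul_le_sq_mul_sq
      ((LC.two_le_card_filter_mem hs₀ hs₁ hs₀₁ hi).trans (hDmax.1 i))
      ((hDmin.1 i).trans (hDmax.1 i)) ((hkmin.1 s₀ hs₀).trans (hkmax.1 s₀ hs₀))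
  have hδ := (LC.mul_hdistToCode_decode_le hcover hf hsound).trans hviol
  have he := (LC.edistToCode_le_decode hcover hDmin_pos hDmin.1 hDmax.1 hkmax.1 hCne).trans
    (add_le_add hviol le_rfl)
  exact LC.const_mul_le_of_le_add_mul (by positivity) hμ (by positivity) (by positivity)
    (by positivity) hprod hδ he

/-- testability of the lifted code with its natural tester implies 2-query
testability of the line code w.r.t. the intersection graph of `S`. -/
theorem statement14 (n : ℕ) (hn : 1 ≤ n) (Sig : Type)
    (S : Finset (Finset (Fin n))) (hS : S.Nonempty)
    (hne : ∀ s ∈ S, s.Nonempty)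
    (hcover : ∀ i : Fin n, ∃ s ∈ S, i ∈ s)
    (Cs : ∀ s : Finset (Fin n), Set (↥s → Sig))
    (hCs : ∀ s ∈ S, (Cs s).Nonempty)
    (hCne : (LC.liftedCode S Cs).Nonempty)
    (kmin kmax Dmin Dmax : ℕ)
    (hkmin : (∀ s ∈ S, kmin ≤ s.card) ∧ ∃ s ∈ S, s.card = kmin)
    (hkmax : (∀ s ∈ S, s.card ≤ kmax) ∧ ∃ s ∈ S, s.card = kmax)
    (hDmin : (∀ i : Fin n, Dmin ≤ (S.filter fun s => i ∈ s).card) ∧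
      ∃ i : Fin n, (S.filter fun s => i ∈ s).card = Dmin)
    (hDmax : (∀ i : Fin n, (S.filter fun s => i ∈ s).card ≤ Dmax) ∧
      ∃ i : Fin n, (S.filter fun s => i ∈ s).card = Dmax)
    -- degrees of the intersection graph of S
    (dmin dmax : ℕ) (hdmin1 : 1 ≤ dmin)
    (hdeg : ∀ s ∈ S,
      dmin ≤ (S.filter fun s' => s' ≠ s ∧ (s ∩ s').Nonempty).card ∧
        (S.filter fun s' => s' ≠ s ∧ (s ∩ s').Nonempty).card ≤ dmax)
    -- the intersection graph has at least one edge
    (hedge : ∃ s ∈ S, ∃ s' ∈ S, s ≠ s' ∧ (s ∩ s').Nonempty)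
    (μ : ℝ) (hμ : 0 ≤ μ)
    -- the natural tester of C has soundness μ
    (hsound : ∀ g : Fin n → Sig,
      μ * LC.hdistToCode g (LC.liftedCode S Cs) ≤
        ((LC.natViolations S Cs g).card : ℝ) / (S.card : ℝ)) :
    -- the 2-query tester T_{G,ℓ} of the line code L has the claimed soundness
    ∀ f : LC.Ensemble S Sig, (∀ s, f s ∈ Cs s.1) →
      (Dmin : ℝ) * (kmin : ℝ) * μ /
            ((dmax : ℝ) * (Dmax : ℝ) ^ 2 * (kmax : ℝ) ^ 2 *
              (μ + (Dmin : ℝ)⁻¹ * (Dmax : ℝ) * (kmax : ℝ))) *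
          LC.edistToCode f (LC.lineCode S Cs) ≤
        ((LC.interViolated S f).card : ℝ) / ((LC.interEdges S).card : ℝ) :=
  statement14_general n Sig S hcover Cs hCne kmin kmax Dmin Dmax hkmin hkmax hDmin hDmax dmin dmax
    hdeg hedge μ hμ hsound
end
end

section
/- Let X be a graded poset and let i ≤ j ≤ k ≤ ℓ be integers. Then F^min_{i,j,ℓ}(X)·F^min_{j,k,ℓ}(X) ≤ F^max_{i,k,ℓ}(X)·F^max_{i,j,k}(X) and F^max_{i,j,ℓ}(X)·F^max_{j,k,ℓ}(X) ≥ F^min_{i,k,ℓ}(X)·F^min_{i,j,k}(X). -/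
open scoped Classical

noncomputable section

/-! Fix an incident pair `x ≤ t` of dimensions `i` and `l` and count the chains
`x ≤ y ≤ z ≤ t` with `dim y = j` and `dim z = k`. Grouping them by `y` shows that their number
lies between `F^min_{i,j,l} F^min_{j,k,l}` and `F^max_{i,j,l} F^max_{j,k,l}`; grouping them by `z`
shows that it lies between `F^min_{i,k,l} F^min_{i,j,k}` and `F^max_{i,k,l} F^max_{i,j,k}`.
If there is no incident pair of dimensions `i`, `l`, the left-hand sides vanish. -/

namespace FK

lemma mul_le_sum_of_le {α : Type*} {s : Finset α} {f : α → ℕ} {a b : ℕ}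
    (hs : a ≤ s.card) (hf : ∀ x ∈ s, b ≤ f x) : a * b ≤ ∑ x ∈ s, f x :=
  calc a * b ≤ s.card * b := Nat.mul_le_mul_right _ hs
    _ ≤ ∑ x ∈ s, f x := by simpa using Finset.card_nsmul_le_sum s f b hf

lemma sum_le_mul_of_le {α : Type*} {s : Finset α} {f : α → ℕ} {A B : ℕ}
    (hs : s.card ≤ A) (hf : ∀ x ∈ s, f x ≤ B) : ∑ x ∈ s, f x ≤ A * B :=
  calc ∑ x ∈ s, f x ≤ s.card * B := by simpa using Finset.sum_le_card_nsmul s f B hf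
    _ ≤ A * B := Nat.mul_le_mul_right _ hs

variable {V : Type*} [Fintype V] [PartialOrder V] (dim : V → ℤ)

@[simp]
lemma mem_facesBetween {j : ℤ} {x y z : V} :
    y ∈ facesBetween dim j x z ↔ dim y = j ∧ x ≤ y ∧ y ≤ z := by
  simp [facesBetween]

@[simp]
lemma mem_incidentPairs_s16 {i k : ℤ} {p : V × V} :
    p ∈ incidentPairs dim i k ↔ dim p.1 = i ∧ dim p.2 = k ∧ p.1 ≤ p.2 := by
  simp [incidentPairs]

lemma Fmin_le_card_facesBetween_s16 {i j k : ℤ} {p : V × V} (hp : p ∈ incidentPairs dim i k) :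
    Fmin dim i j k ≤ (facesBetween dim j p.1 p.2).card := by
  rw [Fmin, dif_pos ⟨p, hp⟩]
  exact Finset.min'_le _ _ (Finset.mem_image_of_mem _ hp)

lemma card_facesBetween_le_Fmax_s16 {i j k : ℤ} {p : V × V} (hp : p ∈ incidentPairs dim i k) :
    (facesBetween dim j p.1 p.2).card ≤ Fmax dim i j k :=
  Finset.le_sup (f := fun p => (facesBetween dim j p.1 p.2).card) hp

lemma Fmin_eq_zero_of_not_nonempty {i j k : ℤ} (h : ¬(incidentPairs dim i k).Nonempty) :
    Fmin dim i j k = 0 :=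
  dif_neg h

lemma sum_card_facesBetween_comm (j k : ℤ) (x t : V) :
    ∑ z ∈ facesBetween dim k x t, (facesBetween dim j x z).card =
      ∑ y ∈ facesBetween dim j x t, (facesBetween dim k y t).card := by
  have below : ∀ z ∈ facesBetween dim k x t,
      (facesBetween dim j x t).bipartiteBelow (· ≤ ·) z = facesBetween dim j x z := by
    intro z hz
    ext y
    simp only [Finset.bipartiteBelow, Finset.mem_filter, mem_facesBetween] at hz ⊢
    exact ⟨fun ⟨⟨hy, hxy, _⟩, hyz⟩ => ⟨hy, hxy, hyz⟩,
      fun ⟨hy, hxy, hyz⟩ => ⟨⟨hy, hxy, hyz.trans hz.2.2⟩, hyz⟩⟩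
  have above : ∀ y ∈ facesBetween dim j x t,
      (facesBetween dim k x t).bipartiteAbove (· ≤ ·) y = facesBetween dim k y t := by
    intro y hy
    ext z
    simp only [Finset.bipartiteAbove, Finset.mem_filter, mem_facesBetween] at hy ⊢
    exact ⟨fun ⟨⟨hz, _, hzt⟩, hyz⟩ => ⟨hz, hyz, hzt⟩,
      fun ⟨hz, hyz, hzt⟩ => ⟨⟨hz, hy.2.1.trans hyz, hzt⟩, hyz⟩⟩
  calc ∑ z ∈ facesBetween dim k x t, (facesBetween dim j x z).card
      = ∑ z ∈ facesBetween dim k x t,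
          ((facesBetween dim j x t).bipartiteBelow (· ≤ ·) z).card :=
        Finset.sum_congr rfl fun z hz => by rw [below z hz]
    _ = ∑ y ∈ facesBetween dim j x t,
          ((facesBetween dim k x t).bipartiteAbove (· ≤ ·) y).card :=
        (Finset.sum_card_bipartiteAbove_eq_sum_card_bipartiteBelow _).symm
    _ = ∑ y ∈ facesBetween dim j x t, (facesBetween dim k y t).card :=
        Finset.sum_congr rfl fun y hy => by rw [above y hy]

variable {dim} {i j k l : ℤ} {x t : V}

lemma sum_card_facesBetween_above_mem_Icc (hp : (x, t) ∈ incidentPairs dim i l) :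
    ∑ y ∈ facesBetween dim j x t, (facesBetween dim k y t).card ∈
      Set.Icc (Fmin dim i j l * Fmin dim j k l) (Fmax dim i j l * Fmax dim j k l) := by
  have hyt : ∀ y ∈ facesBetween dim j x t, (y, t) ∈ incidentPairs dim j l := by
    intro y hy
    simp only [mem_facesBetween, mem_incidentPairs_s16] at hy hp ⊢
    exact ⟨hy.1, hp.2.1, hy.2.2⟩
  exact ⟨mul_le_sum_of_le (Fmin_le_card_facesBetween_s16 dim hp)
      fun y hy => Fmin_le_card_facesBetween_s16 dim (hyt y hy),
    sum_le_mul_of_le (card_facesBetween_le_Fmax_s16 dim hp)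
      fun y hy => card_facesBetween_le_Fmax_s16 dim (hyt y hy)⟩

lemma sum_card_facesBetween_below_mem_Icc (hp : (x, t) ∈ incidentPairs dim i l) :
    ∑ z ∈ facesBetween dim k x t, (facesBetween dim j x z).card ∈
      Set.Icc (Fmin dim i k l * Fmin dim i j k) (Fmax dim i k l * Fmax dim i j k) := by
  have hxz : ∀ z ∈ facesBetween dim k x t, (x, z) ∈ incidentPairs dim i k := by
    intro z hz
    simp only [mem_facesBetween, mem_incidentPairs_s16] at hz hp ⊢
    exact ⟨hp.1, hz.1, hz.2.1⟩
  exact ⟨mul_le_sum_of_le (Fmin_le_card_facesBetween_s16 dim hp)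
      fun z hz => Fmin_le_card_facesBetween_s16 dim (hxz z hz),
    sum_le_mul_of_le (card_facesBetween_le_Fmax_s16 dim hp)
      fun z hz => card_facesBetween_le_Fmax_s16 dim (hxz z hz)⟩

end FK

theorem statement16_general
    (V : Type) [Fintype V] [PartialOrder V] (dim : V → ℤ)
    (i j k l : ℤ) :
    FK.Fmin dim i j l * FK.Fmin dim j k l ≤ FK.Fmax dim i k l * FK.Fmax dim i j k ∧
    FK.Fmin dim i k l * FK.Fmin dim i j k ≤ FK.Fmax dim i j l * FK.Fmax dim j k l := by
  by_cases hP : (FK.incidentPairs dim i l).Nonempty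
  · obtain ⟨⟨x, t⟩, hp⟩ := hP
    have hcount := FK.sum_card_facesBetween_comm dim j k x t
    obtain ⟨above_ge, above_le⟩ := FK.sum_card_facesBetween_above_mem_Icc (k := k) hp
    obtain ⟨below_ge, below_le⟩ := FK.sum_card_facesBetween_below_mem_Icc (j := j) hp
    exact ⟨above_ge.trans (hcount ▸ below_le), below_ge.trans (hcount ▸ above_le)⟩
  · simp [FK.Fmin_eq_zero_of_not_nonempty dim hP]

/-- inequalities between the subface-counting constants of a graded poset. -/
theorem statement16
    (V : Type) [Fintype V] [PartialOrder V] (dim : V → ℤ)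
    (hgraded : FK.IsGraded dim)
    (i j k l : ℤ) (hij : i ≤ j) (hjk : j ≤ k) (hkl : k ≤ l) :
    FK.Fmin dim i j l * FK.Fmin dim j k l ≤ FK.Fmax dim i k l * FK.Fmax dim i j k ∧
    FK.Fmin dim i k l * FK.Fmin dim i j k ≤ FK.Fmax dim i j l * FK.Fmax dim j k l :=
  statement16_general V dim i j k l
end
end
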